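/- arXiv:2202.04347 — 8 statements merged into one kernel-verified Lean document; each statement's English description precedes it below -/
import Mathlib

section
/- Let 0 < c < 1 and let {(x_i, y_i)}_{i=1}^m ⊆ ℝ^d × {−1, 1} be a dataset with ‖x_i‖ = √d for every i ∈ [m] and |⟨x_i, x_j⟩| ≤ c·d for all i ≠ j. Let k ≥ m. Then there exist w_1, …, w_k ∈ ℝ^d and b_1, …, b_k, v_1, …, v_k ∈ ℝ such that the depth-2 ReLU network N(x) = Σ_{j=1}^k v_j · max(0, ⟨w_j, x⟩ + b_j) satisfies: (a) y_i · N(x_i) ≥ 1 for every i ∈ [m]; and (b) for every i ∈ [m] and every x' ∈ ℝ^d with ‖x_i − x'‖ ≤ ((1−c)/4)·√d, we have y_i · N(x') > 0 (so flipping the sign of the output at x_i requires a perturbation of Euclidean norm larger than ((1−c)/4)·√d). -/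
open InnerProductSpace Finset

/-- A depth-2 ReLU network of width `k` with first-layer weights `w`, biases `b`
and second-layer weights `v`. -/
noncomputable def net {d k : ℕ} (w : Fin k → EuclideanSpace ℝ (Fin d))
    (b v : Fin k → ℝ) (z : EuclideanSpace ℝ (Fin d)) : ℝ :=
  ∑ j, v j * max 0 (⟪w j, z⟫_ℝ + b j)

/-- existence of a `√d`-robust depth-2 ReLU network correctly
classifying an almost-orthogonal dataset. -/
theorem robust_network_exists (d m k : ℕ) (hd : 0 < d)
    (c : ℝ) (hc0 : 0 < c) (hc1 : c < 1)
    (x : Fin m → EuclideanSpace ℝ (Fin d)) (y : Fin m → ℝ)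
    (hy : ∀ i, y i = 1 ∨ y i = -1)
    (hx : ∀ i, ‖x i‖ = Real.sqrt d)
    (hip : ∀ i j, i ≠ j → |⟪x i, x j⟫_ℝ| ≤ c * d)
    (hk : m ≤ k) :
    ∃ (w : Fin k → EuclideanSpace ℝ (Fin d)) (b v : Fin k → ℝ),
      (∀ i, 1 ≤ y i * net w b v (x i)) ∧
      (∀ i, ∀ x' : EuclideanSpace ℝ (Fin d),
        ‖x i - x'‖ ≤ (1 - c) / 4 * Real.sqrt d → 0 < y i * net w b v x') := by
  have hd' : (0:ℝ) < d := by exact_mod_cast hd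
  have h1c : (0:ℝ) < 1 - c := by linarith
  have hsq : Real.sqrt d * Real.sqrt d = d := Real.mul_self_sqrt hd'.le
  set T : ℝ := ↑d * (1 + c) / 2 with hTdef
  set s : ℝ := 2 / (↑d * (1 - c)) with hsdef
  have hs0 : 0 < s := by rw [hsdef]; positivity
  set w : Fin k → EuclideanSpace ℝ (Fin d) :=
    fun j => if h : (j : ℕ) < m then x ⟨j, h⟩ else 0 with hw
  set b : Fin k → ℝ := fun _ => -T with hb
  set v : Fin k → ℝ :=
    fun j => if h : (j : ℕ) < m then s * y ⟨j, h⟩ else 0 with hv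
  have key : ∀ (i : Fin m) (x' : EuclideanSpace ℝ (Fin d)),
      ‖x i - x'‖ ≤ (1 - c) / 4 * Real.sqrt d →
      y i * net w b v x' = s * (⟪x i, x'⟫_ℝ - T) ∧
      (1 - c) / 4 * ↑d ≤ ⟪x i, x'⟫_ℝ - T := by
    intro i x' hx'
    have hxi : ⟪x i, x i⟫_ℝ = d := by
      rw [real_inner_self_eq_norm_mul_norm, hx i, hsq]
    have hpert : ∀ j : Fin m, |⟪x j, x i - x'⟫_ℝ| ≤ (1 - c) / 4 * ↑d := by
      intro j
      calc |⟪x j, x i - x'⟫_ℝ| ≤ ‖x j‖ * ‖x i - x'‖ := abs_real_inner_le_norm _ _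
        _ ≤ Real.sqrt d * ((1 - c) / 4 * Real.sqrt d) := by
            rw [hx j]
            exact mul_le_mul_of_nonneg_left hx' (Real.sqrt_nonneg _)
        _ = (1 - c) / 4 * (Real.sqrt d * Real.sqrt d) := by ring
        _ = (1 - c) / 4 * ↑d := by rw [hsq]
    have hii : (1 - c) / 4 * ↑d ≤ ⟪x i, x'⟫_ℝ - T := by
      have h1 : ⟪x i, x i - x'⟫_ℝ = ⟪x i, x i⟫_ℝ - ⟪x i, x'⟫_ℝ := inner_sub_right _ _ _
      have h2 := (abs_le.mp (hpert i)).2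
      rw [h1, hxi] at h2
      rw [hTdef]; linarith
    refine ⟨?_, hii⟩
    have hii0 : (0:ℝ) < ⟪x i, x'⟫_ℝ - T :=
      lt_of_lt_of_le (by positivity) hii
    have hnet : net w b v x' = s * y i * (⟪x i, x'⟫_ℝ - T) := by
      unfold net
      rw [Finset.sum_eq_single (⟨(i : ℕ), lt_of_lt_of_le i.2 hk⟩ : Fin k)]
      · simp only [hw, hv, hb, dif_pos i.2, Fin.eta]
        rw [max_eq_right (by linarith : (0:ℝ) ≤ ⟪x i, x'⟫_ℝ + -T)]
        ring
      · intro j _ hj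
        by_cases h : (j : ℕ) < m
        · have hne : (⟨(j : ℕ), h⟩ : Fin m) ≠ i := by
            intro hcon
            apply hj
            have : (j : ℕ) = (i : ℕ) := by
              simpa using congrArg Fin.val hcon
            exact Fin.ext this
          have h1 : ⟪x ⟨(j : ℕ), h⟩, x i⟫_ℝ ≤ c * d := le_of_abs_le (hip _ _ hne)
          have h2 := (abs_le.mp (hpert ⟨(j : ℕ), h⟩)).1
          have h3 : ⟪x ⟨(j : ℕ), h⟩, x i - x'⟫_ℝ
              = ⟪x ⟨(j : ℕ), h⟩, x i⟫_ℝ - ⟪x ⟨(j : ℕ), h⟩, x'⟫_ℝ := inner_sub_right _ _ _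
          rw [h3] at h2
          have hcd : c * ↑d ≤ ↑d := by nlinarith
          have hle : ⟪x ⟨(j : ℕ), h⟩, x'⟫_ℝ + -T ≤ 0 := by
            rw [hTdef]; linarith
          simp only [hw, hv, hb, dif_pos h]
          rw [max_eq_left hle, mul_zero]
        · simp only [hv, dif_neg h, zero_mul]
      · intro hmem
        exact absurd (Finset.mem_univ _) hmem
    rw [hnet]
    rcases hy i with h | h <;> rw [h] <;> ring
  refine ⟨w, b, v, ?_, ?_⟩
  · intro i
    have h0 : ‖x i - x i‖ ≤ (1 - c) / 4 * Real.sqrt d := by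
      simp [sub_self]
      positivity
    obtain ⟨heq, _⟩ := key i (x i) h0
    have hxi : ⟪x i, x i⟫_ℝ = d := by
      rw [real_inner_self_eq_norm_mul_norm, hx i, hsq]
    rw [heq, hxi, hsdef, hTdef]
    rw [div_mul_eq_mul_div, le_div_iff₀ (by positivity)]
    ring_nf
    nlinarith [mul_pos hd' h1c]
  · intro i x' hx'
    obtain ⟨heq, hge⟩ := key i x' hx'
    rw [heq]
    exact mul_pos hs0 (lt_of_lt_of_le (by positivity) hge)
end

section
/- Let d ≥ 6, let k ≥ 1 be a real number, and let m be a positive integer with m ≤ d^k. Let μ be the uniform (rotation-invariant) probability measure on the unit sphere S^{d−1} ⊆ ℝ^d and let μ^m be its m-fold product measure on (S^{d−1})^m. Then μ^m of the event { (x_1, …, x_m) : there exist i ≠ j with |⟨x_i, x_j⟩| > ln(d)/√d } is at most d^{2k+1−ln(d)/4}; equivalently, with probability at least 1 − d^{2k+1−ln(d)/4}, independent uniform x_1, …, x_m on S^{d−1} satisfy |⟨x_i, x_j⟩| ≤ ln(d)/√d for all i ≠ j. -/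
/-!
A rotation-invariant probability measure on the sphere has the moments of the uniform one: the
coordinate moments satisfy `(d + n) 𝔼[xᵢⁿ⁺²] = (n + 1) 𝔼[xᵢⁿ]`, because averaging over the
rotations of the `(i, j)`-plane gives `𝔼[xᵢⁿ⁺²] = (n + 1) 𝔼[xᵢⁿ xⱼ²]` while `∑ⱼ xⱼ² = 1` and all
`j ≠ i` play the same role. Hence `𝔼[xᵢ²ᵖ] = ∏_{q<p} (2q+1)/(d+2q) ≤ (p/d)ᵖ`. For a fixed unit
vector `a`, `⟪a, x⟫` has the law of a coordinate (reflect `a` onto `eᵢ`), so Markov's inequality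
for the `2p`-th moment bounds `μ(|⟪a, x⟫| > t)` by `(p / (d t²))ᵖ`. With `t = ln d / √d` and
`p ≈ (ln d)² / 3` this is at most `e^{-(ln d)²/4}`, and a union bound over the `m² ≤ d^{2k}`
ordered pairs concludes.
-/

open InnerProductSpace MeasureTheory ProbabilityTheory Real

theorem Continuous.integrable_of_ae_mem_compact {X E : Type*} [TopologicalSpace X] [T2Space X]
    [MeasurableSpace X] [OpensMeasurableSpace X] [NormedAddCommGroup E] {μ : Measure X}
    [IsFiniteMeasure μ] {K : Set X} (hK : IsCompact K) (hμK : ∀ᵐ x ∂μ, x ∈ K) {f : X → E}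
    (hf : Continuous f) : Integrable f μ := by
  rw [← Measure.restrict_eq_self_of_ae_mem hμK]
  exact hf.continuousOn.integrableOn_compact hK

theorem Continuous.integrable_of_ae_norm_eq_one {E : Type*} [NormedAddCommGroup E]
    [ProperSpace E] [MeasurableSpace E] [BorelSpace E] {μ : Measure E} [IsFiniteMeasure μ]
    (hμ : ∀ᵐ x ∂μ, ‖x‖ = 1) {f : E → ℝ} (hf : Continuous f) : Integrable f μ :=
  hf.integrable_of_ae_mem_compact (isCompact_sphere 0 1) (by simpa using hμ)

theorem measure_lt_abs_le_integral_pow_div {α : Type*} [MeasurableSpace α] {μ : Measure α}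
    [IsFiniteMeasure μ] {f : α → ℝ} {p : ℕ} (hf : Integrable (fun x => f x ^ (2 * p)) μ) {t : ℝ}
    (ht : 0 < t) : μ {x | t < |f x|} ≤ ENNReal.ofReal ((∫ x, f x ^ (2 * p) ∂μ) / t ^ (2 * p)) := by
  have hsub : {x | t < |f x|} ⊆ {x | t ^ (2 * p) ≤ f x ^ (2 * p)} := fun x hx => by
    simpa only [Set.mem_ofPred_eq, (even_two_mul p).pow_abs] using
      pow_le_pow_left₀ ht.le (le_of_lt hx) (2 * p)
  refine (measure_mono hsub).trans ?_
  rw [← ofReal_measureReal]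
  refine ENNReal.ofReal_le_ofReal ((le_div_iff₀ (by positivity)).2 ?_)
  rw [mul_comm]
  exact mul_meas_ge_le_integral_of_nonneg
    (ae_of_all _ fun x => (even_two_mul p).pow_nonneg (f x)) hf _

theorem measure_exists_ne_le {Ω κ : Type*} [MeasurableSpace Ω] [Fintype κ] (ν : Measure Ω)
    {P : κ → κ → Ω → Prop} {c : ENNReal} (h : ∀ i j, i ≠ j → ν {x | P i j x} ≤ c) :
    ν {x | ∃ i j, i ≠ j ∧ P i j x} ≤ Fintype.card κ * Fintype.card κ * c := by
  have hpair : ∀ i j, ν {x | i ≠ j ∧ P i j x} ≤ c := fun i j => by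
    rcases eq_or_ne i j with rfl | hij
    · simp
    · exact (measure_mono fun x hx => hx.2).trans (h i j hij)
  calc ν {x | ∃ i j, i ≠ j ∧ P i j x} ≤ ν (⋃ i, ⋃ j, {x | i ≠ j ∧ P i j x}) :=
        measure_mono fun x ⟨i, j, hx⟩ => Set.mem_iUnion₂.2 ⟨i, j, hx⟩
    _ ≤ ∑ _i : κ, ∑ _j : κ, c :=
        (measure_iUnion_fintype_le _ _).trans (Finset.sum_le_sum fun i _ =>
          (measure_iUnion_fintype_le _ _).trans (Finset.sum_le_sum fun j _ => hpair i j))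
    _ = Fintype.card κ * Fintype.card κ * c := by
        simp only [Finset.sum_const, Finset.card_univ, nsmul_eq_mul, mul_assoc]

theorem map_pi_pair_eq_prod {Ω ι : Type*} [MeasurableSpace Ω] [Fintype ι] (μ : Measure Ω)
    [IsProbabilityMeasure μ] {i j : ι} (hij : i ≠ j) :
    (Measure.pi fun _ : ι => μ).map (fun x => (x i, x j)) = μ.prod μ := by
  have hindep : IndepFun (fun x : ι → Ω => x i) (fun x => x j) (Measure.pi fun _ => μ) :=
    (iIndepFun_pi (μ := fun _ => μ) (X := fun _ => id) fun _ => aemeasurable_id).indepFun hij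
  rw [(indepFun_iff_map_prod_eq_prod_map_map (measurable_pi_apply i).aemeasurable
    (measurable_pi_apply j).aemeasurable).1 hindep, (measurePreserving_eval _ i).map_eq,
    (measurePreserving_eval _ j).map_eq]

theorem Nat.prod_range_two_mul_add_one_le_pow (p : ℕ) :
    ∏ q ∈ Finset.range p, (2 * q + 1) ≤ p ^ p := by
  have hpair : ∀ q ∈ Finset.range p, (2 * q + 1) * (2 * (p - 1 - q) + 1) ≤ p ^ 2 := by
    intro q hq
    obtain ⟨r, rfl⟩ : ∃ r, p = q + r + 1 := ⟨p - 1 - q, by have := Finset.mem_range.1 hq; omega⟩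
    rw [show q + r + 1 - 1 - q = r by omega]
    nlinarith [sq_nonneg (q - r : ℤ)]
  have hsq : (∏ q ∈ Finset.range p, (2 * q + 1)) ^ 2 ≤ (p ^ p) ^ 2 :=
    calc (∏ q ∈ Finset.range p, (2 * q + 1)) ^ 2
        = ∏ q ∈ Finset.range p, (2 * q + 1) * (2 * (p - 1 - q) + 1) := by
          rw [sq, Finset.prod_mul_distrib, ← Finset.prod_range_reflect (fun q => 2 * q + 1) p]
      _ ≤ ∏ _q ∈ Finset.range p, p ^ 2 := Finset.prod_le_prod' hpair
      _ = (p ^ p) ^ 2 := by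
          rw [Finset.prod_const, Finset.card_range, ← pow_mul, ← pow_mul, mul_comm]
  exact (Nat.pow_le_pow_iff_left two_ne_zero).1 hsq

theorem intervalIntegral_rotated_pow_eq_zero (n : ℕ) (a b : ℝ) :
    ∫ θ in 0..2 * π, ((cos θ * a - sin θ * b) ^ (n + 2)
      - (n + 1) * (cos θ * a - sin θ * b) ^ n * (sin θ * a + cos θ * b) ^ 2) = 0 := by
  set u : ℝ → ℝ := fun θ => cos θ * a - sin θ * b
  set v : ℝ → ℝ := fun θ => sin θ * a + cos θ * b
  have hu : ∀ θ, HasDerivAt u (-v θ) θ := fun θ =>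
    (((hasDerivAt_cos θ).mul_const a).sub ((hasDerivAt_sin θ).mul_const b)).congr_deriv
      (by simp only [v]; ring)
  have hv : ∀ θ, HasDerivAt v (u θ) θ := fun θ =>
    (((hasDerivAt_sin θ).mul_const a).add ((hasDerivAt_cos θ).mul_const b)).congr_deriv
      (by simp only [u]; ring)
  have hderiv : ∀ θ, HasDerivAt (fun θ => u θ ^ (n + 1) * v θ)
      (u θ ^ (n + 2) - (n + 1) * u θ ^ n * v θ ^ 2) θ := fun θ =>
    (((hu θ).pow (n + 1)).mul (hv θ)).congr_deriv
      (by push_cast [Pi.pow_apply, Nat.add_sub_cancel]; ring)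
  rw [intervalIntegral.integral_eq_sub_of_hasDerivAt (fun θ _ => hderiv θ)
    (Continuous.intervalIntegrable (by fun_prop) _ _)]
  simp [u, v]

theorem div_sq_pow_ceil_le_exp {L : ℝ} (hL : 12 ≤ L) :
    ((⌈L ^ 2 / 3⌉₊ : ℝ) / L ^ 2) ^ ⌈L ^ 2 / 3⌉₊ ≤ exp (-(L ^ 2 / 4)) := by
  set p := ⌈L ^ 2 / 3⌉₊
  have hp_ge : L ^ 2 / 3 ≤ p := Nat.le_ceil _
  have hp_lt : (p : ℝ) < L ^ 2 / 3 + 1 := Nat.ceil_lt_add_one (by positivity)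
  have hbase : (p : ℝ) / L ^ 2 ≤ exp (-(3 / 4)) := by
    have hexp : (5 / 8 : ℝ) ^ 2 ≤ exp (-(3 / 4)) := by
      have := add_one_le_exp (-(3 / 8))
      calc (5 / 8 : ℝ) ^ 2 ≤ exp (-(3 / 8)) ^ 2 := by gcongr; linarith
        _ = exp (-(3 / 4)) := by rw [← exp_nat_mul]; norm_num
    rw [div_le_iff₀ (by positivity)]
    nlinarith
  calc ((p : ℝ) / L ^ 2) ^ p ≤ exp (-(3 / 4)) ^ p := by gcongr
    _ = exp (-(3 / 4) * p) := by rw [← exp_nat_mul, mul_comm]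
    _ ≤ exp (-(L ^ 2 / 4)) := exp_le_exp.2 (by linarith)

theorem mul_self_mul_exp_le_rpow {d k m : ℝ} (hd : 1 < d) (hm : 0 ≤ m) (hmd : m ≤ d ^ k) :
    m * m * exp (-(log d ^ 2 / 4)) ≤ d ^ (2 * k + 1 - log d / 4) := by
  have hlog : 0 < log d := log_pos hd
  calc m * m * exp (-(log d ^ 2 / 4)) ≤ d ^ k * d ^ k * exp (-(log d ^ 2 / 4)) := by gcongr
    _ ≤ d ^ (2 * k + 1 - log d / 4) := by
      rw [rpow_def_of_pos (by positivity), rpow_def_of_pos (by positivity), ← exp_add, ← exp_add]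
      exact exp_le_exp.2 (by nlinarith)

section RotationInvariant

variable {E : Type*} [NormedAddCommGroup E] [InnerProductSpace ℝ E] [MeasurableSpace E]
  [BorelSpace E]

def IsRotationInvariant (μ : Measure E) : Prop :=
  ∀ R : E ≃ₗᵢ[ℝ] E, μ.map R = μ

variable {μ : Measure E}

theorem integral_comp_linearIsometryEquiv {R : E ≃ₗᵢ[ℝ] E} (hR : μ.map R = μ) (f : E → ℝ) :
    ∫ x, f (R x) ∂μ = ∫ x, f x ∂μ :=
  MeasurePreserving.integral_comp' (f := R.toHomeomorph.toMeasurableEquiv)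
    ⟨R.continuous.measurable, hR⟩ f

theorem integral_eq_zero_of_integral_comp_eq_zero {β : Type*} [MeasurableSpace β] [SFinite μ]
    {ν : Measure β} [IsFiniteMeasure ν] [NeZero ν] {R : β → E ≃ₗᵢ[ℝ] E}
    (hR : ∀ b, μ.map (R b) = μ) {f : E → ℝ}
    (hf : Integrable (fun z : β × E => f (R z.1 z.2)) (ν.prod μ))
    (havg : ∀ x, ∫ b, f (R b x) ∂ν = 0) : ∫ x, f x ∂μ = 0 := by
  have hswap := integral_integral_swap (f := fun b x => f (R b x)) hf
  simp only [integral_comp_linearIsometryEquiv (hR _), havg, integral_const, smul_eq_mul,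
    mul_zero] at hswap
  exact (mul_eq_zero.1 hswap).resolve_left measureReal_univ_ne_zero

theorem IsRotationInvariant.map_inner_eq (hrot : IsRotationInvariant μ) {a b : E}
    (hab : ‖a‖ = ‖b‖) : μ.map (fun x => ⟪a, x⟫_ℝ) = μ.map (fun x => ⟪b, x⟫_ℝ) := by
  set R := Submodule.reflection (ℝ ∙ (b - a))ᗮ
  have hinner : (fun x => ⟪a, x⟫_ℝ) = (fun x => ⟪b, x⟫_ℝ) ∘ R.symm := by
    ext x
    rw [Function.comp_apply, ← R.inner_map_map b, R.apply_symm_apply,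
      Submodule.reflection_sub hab.symm]
  rw [hinner, ← Measure.map_map (by fun_prop) R.symm.continuous.measurable, hrot]

end RotationInvariant

namespace EuclideanSpace

variable {ι : Type*} [DecidableEq ι] {i j : ι}

noncomputable def planeRotationLinearMap (i j : ι) (θ : ℝ) :
    EuclideanSpace ℝ ι →ₗ[ℝ] EuclideanSpace ℝ ι where
  toFun x := WithLp.toLp 2 fun k =>
    if k = i then cos θ * x i - sin θ * x j
    else if k = j then sin θ * x i + cos θ * x j else x k
  map_add' x y := by ext k; simp only [PiLp.add_apply]; split_ifs <;> ring
  map_smul' c x := by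
    ext k; simp only [PiLp.smul_apply, smul_eq_mul, RingHom.id_apply]; split_ifs <;> ring

theorem norm_planeRotationLinearMap [Fintype ι] (hij : i ≠ j) (θ : ℝ)
    (x : EuclideanSpace ℝ ι) : ‖planeRotationLinearMap i j θ x‖ = ‖x‖ := by
  have hsum : ∑ k, ((planeRotationLinearMap i j θ x k) ^ 2 - x k ^ 2) = 0 := by
    rw [Fintype.sum_eq_add i j hij fun k hk => by simp [planeRotationLinearMap, hk.1, hk.2]]
    simp only [planeRotationLinearMap, LinearMap.coe_mk, AddHom.coe_mk, if_pos, hij.symm,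
      if_false]
    linear_combination (x i ^ 2 + x j ^ 2) * sin_sq_add_cos_sq θ
  rw [← sq_eq_sq₀ (norm_nonneg _) (norm_nonneg _), real_norm_sq_eq, real_norm_sq_eq,
    ← sub_eq_zero, ← Finset.sum_sub_distrib, hsum]

noncomputable def planeRotation [Fintype ι] (hij : i ≠ j) (θ : ℝ) :
    EuclideanSpace ℝ ι ≃ₗᵢ[ℝ] EuclideanSpace ℝ ι :=
  LinearIsometry.toLinearIsometryEquiv
    ⟨planeRotationLinearMap i j θ, norm_planeRotationLinearMap hij θ⟩ rfl

variable [Fintype ι] (hij : i ≠ j)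

theorem planeRotation_apply_left (θ : ℝ) (x : EuclideanSpace ℝ ι) :
    planeRotation hij θ x i = cos θ * x i - sin θ * x j := by
  simp [planeRotation, planeRotationLinearMap]

theorem planeRotation_apply_right (θ : ℝ) (x : EuclideanSpace ℝ ι) :
    planeRotation hij θ x j = sin θ * x i + cos θ * x j := by
  simp [planeRotation, planeRotationLinearMap, hij.symm]

theorem continuous_planeRotation :
    Continuous fun z : ℝ × EuclideanSpace ℝ ι => planeRotation hij z.1 z.2 := by
  refine (PiLp.continuous_toLp 2 _).comp (continuous_pi fun k => ?_)
  dsimp [planeRotation, planeRotationLinearMap]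
  split_ifs <;> fun_prop

end EuclideanSpace

section SphereMoments

variable {ι : Type*} [Fintype ι] [DecidableEq ι] {μ : Measure (EuclideanSpace ℝ ι)}

theorem integrable_comp_planeRotation [IsFiniteMeasure μ] (hμ : ∀ᵐ x ∂μ, ‖x‖ = 1) {i j : ι}
    (hij : i ≠ j) {f : EuclideanSpace ℝ ι → ℝ} (hf : Continuous f) :
    Integrable (fun z : ℝ × EuclideanSpace ℝ ι => f (EuclideanSpace.planeRotation hij z.1 z.2))
      ((volume.restrict (Set.Ioc 0 (2 * π))).prod μ) := by
  refine (hf.comp (EuclideanSpace.continuous_planeRotation hij)).integrable_of_ae_mem_compact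
    ((isCompact_Icc (a := 0) (b := 2 * π)).prod (isCompact_sphere 0 1)) ?_
  filter_upwards [Measure.quasiMeasurePreserving_fst.ae (ae_restrict_mem measurableSet_Ioc),
    Measure.quasiMeasurePreserving_snd.ae hμ] with z hz1 hz2
  exact ⟨Set.Ioc_subset_Icc_self hz1, by simpa using hz2⟩

theorem integral_coord_pow_add_two [IsFiniteMeasure μ] (hμ : ∀ᵐ x ∂μ, ‖x‖ = 1)
    (hrot : IsRotationInvariant μ) {i j : ι} (hij : i ≠ j) (n : ℕ) :
    ∫ x, x i ^ (n + 2) ∂μ = (n + 1) * ∫ x, x i ^ n * x j ^ 2 ∂μ := by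
  set f : EuclideanSpace ℝ ι → ℝ := fun x => x i ^ (n + 2) - (n + 1) * (x i ^ n * x j ^ 2)
  have hrotated : ∀ θ x, f (EuclideanSpace.planeRotation hij θ x) =
      (cos θ * x i - sin θ * x j) ^ (n + 2)
        - (n + 1) * (cos θ * x i - sin θ * x j) ^ n * (sin θ * x i + cos θ * x j) ^ 2 := by
    intro θ x
    simp only [f, EuclideanSpace.planeRotation_apply_left,
      EuclideanSpace.planeRotation_apply_right]
    ring
  have : NeZero (volume.restrict (Set.Ioc 0 (2 * π))) :=
    ⟨by simp [Measure.restrict_eq_zero, pi_pos]⟩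
  have hzero : ∫ x, f x ∂μ = 0 := by
    refine integral_eq_zero_of_integral_comp_eq_zero (fun θ => hrot _)
      (integrable_comp_planeRotation hμ hij (by fun_prop)) fun x => ?_
    rw [← intervalIntegral.integral_of_le (by positivity)]
    simp only [hrotated]
    exact intervalIntegral_rotated_pow_eq_zero n (x i) (x j)
  have hint : ∀ g : EuclideanSpace ℝ ι → ℝ, Continuous g → Integrable g μ :=
    fun g hg => hg.integrable_of_ae_norm_eq_one hμ
  rw [integral_sub (hint _ (by fun_prop)) ((hint _ (by fun_prop)).const_mul _),
    integral_const_mul, sub_eq_zero] at hzero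
  exact hzero

theorem integral_coord_pow_mul_sq_eq (hrot : IsRotationInvariant μ) {i j k : ι} (hj : j ≠ i)
    (hk : k ≠ i) (n : ℕ) :
    ∫ x, x i ^ n * x j ^ 2 ∂μ = ∫ x, x i ^ n * x k ^ 2 ∂μ := by
  rw [← integral_comp_linearIsometryEquiv
    (hrot (LinearIsometryEquiv.piLpCongrLeft 2 ℝ ℝ (Equiv.swap j k)))]
  simp [Equiv.swap_apply_of_ne_of_ne hj.symm hk.symm]

theorem card_add_mul_integral_coord_pow_add_two [IsFiniteMeasure μ] [Nontrivial ι]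
    (hμ : ∀ᵐ x ∂μ, ‖x‖ = 1) (hrot : IsRotationInvariant μ) (i : ι) (n : ℕ) :
    (Fintype.card ι + n) * ∫ x, x i ^ (n + 2) ∂μ = (n + 1) * ∫ x, x i ^ n ∂μ := by
  obtain ⟨j, hji⟩ := exists_ne i
  have hint : ∀ k, Integrable (fun x : EuclideanSpace ℝ ι => x i ^ n * x k ^ 2) μ :=
    fun k => Continuous.integrable_of_ae_norm_eq_one hμ (by fun_prop)
  have hsum : ∫ x, x i ^ n ∂μ = ∑ k, ∫ x, x i ^ n * x k ^ 2 ∂μ := by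
    rw [← integral_finsetSum _ fun k _ => hint k]
    refine integral_congr_ae ?_
    filter_upwards [hμ] with x hx
    rw [← Finset.mul_sum, ← EuclideanSpace.real_norm_sq_eq, hx, one_pow, mul_one]
  have hsplit : ∑ k, ∫ x, x i ^ n * x k ^ 2 ∂μ
      = ∫ x, x i ^ (n + 2) ∂μ + (Fintype.card ι - 1) * ∫ x, x i ^ n * x j ^ 2 ∂μ := by
    rw [← Finset.add_sum_erase _ _ (Finset.mem_univ i), Finset.sum_congr rfl fun k hk =>
      integral_coord_pow_mul_sq_eq hrot (Finset.ne_of_mem_erase hk) hji n, Finset.sum_const,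
      Finset.card_erase_of_mem (Finset.mem_univ i), Finset.card_univ, nsmul_eq_mul,
      Nat.cast_sub Fintype.card_pos]
    simp only [← pow_add, Nat.cast_one]
  rw [hsum, hsplit, integral_coord_pow_add_two hμ hrot hji.symm n]
  ring

theorem integral_coord_pow_two_mul [IsProbabilityMeasure μ] [Nontrivial ι]
    (hμ : ∀ᵐ x ∂μ, ‖x‖ = 1) (hrot : IsRotationInvariant μ) (i : ι) (p : ℕ) :
    ∫ x, x i ^ (2 * p) ∂μ = ∏ q ∈ Finset.range p, (2 * q + 1) / (Fintype.card ι + 2 * q : ℝ) := by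
  induction p with
  | zero => simp
  | succ p ih =>
    have hrec := card_add_mul_integral_coord_pow_add_two hμ hrot i (2 * p)
    have hpos : (0 : ℝ) < Fintype.card ι + 2 * p := by positivity
    rw [Finset.prod_range_succ, ← ih, mul_div_assoc', eq_div_iff hpos.ne', mul_add_one 2 p]
    push_cast at hrec
    linarith

theorem integral_coord_pow_two_mul_le [IsProbabilityMeasure μ] [Nontrivial ι]
    (hμ : ∀ᵐ x ∂μ, ‖x‖ = 1) (hrot : IsRotationInvariant μ) (i : ι) (p : ℕ) :
    ∫ x, x i ^ (2 * p) ∂μ ≤ (p / Fintype.card ι) ^ p := by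
  have hd : (0 : ℝ) < Fintype.card ι := by positivity
  calc ∫ x, x i ^ (2 * p) ∂μ
      = ∏ q ∈ Finset.range p, (2 * q + 1) / (Fintype.card ι + 2 * q : ℝ) :=
        integral_coord_pow_two_mul hμ hrot i p
    _ ≤ ∏ q ∈ Finset.range p, (2 * q + 1) / (Fintype.card ι : ℝ) :=
        Finset.prod_le_prod (fun q _ => by positivity) fun q _ =>
          div_le_div_of_nonneg_left (by positivity) hd (by linarith [q.cast_nonneg (α := ℝ)])
    _ = (∏ q ∈ Finset.range p, (2 * q + 1 : ℕ)) / (Fintype.card ι : ℝ) ^ p := by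
        rw [Finset.prod_div_distrib, Finset.prod_const, Finset.card_range]; push_cast; rfl
    _ ≤ (p / Fintype.card ι) ^ p := by
        rw [div_pow]
        gcongr
        exact_mod_cast Nat.prod_range_two_mul_add_one_le_pow p

theorem measure_lt_abs_inner_le [IsProbabilityMeasure μ] [Nontrivial ι]
    (hμ : ∀ᵐ x ∂μ, ‖x‖ = 1) (hrot : IsRotationInvariant μ) {a : EuclideanSpace ℝ ι}
    (ha : ‖a‖ = 1) {t : ℝ} (ht : 0 < t) (p : ℕ) :
    μ {x | t < |⟪a, x⟫_ℝ|} ≤ ENNReal.ofReal ((p / (Fintype.card ι * t ^ 2)) ^ p) := by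
  obtain ⟨i⟩ := (inferInstance : Nonempty ι)
  have hlaw := hrot.map_inner_eq (a := a) (b := EuclideanSpace.single i 1) (by simp [ha])
  have hevent : MeasurableSet {y : ℝ | t < |y|} := measurableSet_lt measurable_const measurable_abs
  have hcoord : μ {x | t < |⟪a, x⟫_ℝ|} = μ {x | t < |x i|} := by
    have := congrArg (· {y : ℝ | t < |y|}) hlaw
    rw [Measure.map_apply (by fun_prop) hevent, Measure.map_apply (by fun_prop) hevent] at this
    simpa [EuclideanSpace.inner_single_left] using this
  rw [hcoord]
  refine (measure_lt_abs_le_integral_pow_div (p := p)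
    (Continuous.integrable_of_ae_norm_eq_one hμ (by fun_prop)) ht).trans
    (ENNReal.ofReal_le_ofReal ?_)
  calc (∫ x, x i ^ (2 * p) ∂μ) / t ^ (2 * p) ≤ (p / Fintype.card ι) ^ p / t ^ (2 * p) := by
        gcongr; exact integral_coord_pow_two_mul_le hμ hrot i p
    _ = (p / (Fintype.card ι * t ^ 2)) ^ p := by rw [pow_mul, ← div_pow, div_div]


theorem measure_pi_lt_abs_inner_le {κ : Type*} [Fintype κ] [IsProbabilityMeasure μ]
    [Nontrivial ι] (hμ : ∀ᵐ x ∂μ, ‖x‖ = 1) (hrot : IsRotationInvariant μ) {k l : κ} (hkl : k ≠ l)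
    {t : ℝ} (ht : 0 < t) (p : ℕ) :
    (Measure.pi fun _ : κ => μ) {x | t < |⟪x k, x l⟫_ℝ|}
      ≤ ENNReal.ofReal ((p / (Fintype.card ι * t ^ 2)) ^ p) := by
  set S := {z : EuclideanSpace ℝ ι × EuclideanSpace ℝ ι | t < |⟪z.1, z.2⟫_ℝ|}
  have hS : MeasurableSet S := measurableSet_lt measurable_const (by fun_prop)
  have hpair : Measurable fun x : κ → EuclideanSpace ℝ ι => (x k, x l) := by fun_prop
  calc (Measure.pi fun _ : κ => μ) {x | t < |⟪x k, x l⟫_ℝ|}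
      = ((Measure.pi fun _ : κ => μ).map fun x => (x k, x l)) S :=
        (Measure.map_apply hpair hS).symm
    _ = ∫⁻ a, μ (Prod.mk a ⁻¹' S) ∂μ := by rw [map_pi_pair_eq_prod μ hkl, Measure.prod_apply hS]
    _ ≤ ∫⁻ _, ENNReal.ofReal ((p / (Fintype.card ι * t ^ 2)) ^ p) ∂μ :=
        lintegral_mono_ae (by
          filter_upwards [hμ] with a ha using measure_lt_abs_inner_le hμ hrot ha ht p)
    _ = ENNReal.ofReal ((p / (Fintype.card ι * t ^ 2)) ^ p) := by simp

end SphereMoments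

theorem pairwise_inner_log_small_whp_general (d : ℕ) (hd : 6 ≤ d) (k : ℝ) (hk : 1 ≤ k)
    (m : ℕ) (hmd : (m : ℝ) ≤ (d : ℝ) ^ k)
    (μ : Measure (EuclideanSpace ℝ (Fin d))) [IsProbabilityMeasure μ]
    (hsphere : μ (Metric.sphere (0 : EuclideanSpace ℝ (Fin d)) 1) = 1)
    (hrot : ∀ R : EuclideanSpace ℝ (Fin d) ≃ₗᵢ[ℝ] EuclideanSpace ℝ (Fin d),
      Measure.map R μ = μ) :
    (Measure.pi fun _ : Fin m => μ)
        {x : Fin m → EuclideanSpace ℝ (Fin d) |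
          ∃ i j, i ≠ j ∧ Real.log d / Real.sqrt d < |⟪x i, x j⟫_ℝ|} ≤
      ENNReal.ofReal ((d : ℝ) ^ (2 * k + 1 - Real.log d / 4)) := by
  have hd1 : (1 : ℝ) < d := by exact_mod_cast (by omega : 1 < d)
  set L := log d
  by_cases htriv : 0 ≤ 2 * k + 1 - L / 4
  · exact prob_le_one.trans (ENNReal.one_le_ofReal.2 (one_le_rpow hd1.le htriv))
  have hL : 12 ≤ L := by linarith
  have : Nontrivial (Fin d) := Fin.nontrivial_iff_two_le.2 (by omega)
  have hμ : ∀ᵐ x ∂μ, ‖x‖ = 1 :=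
    Filter.mem_of_superset (mem_ae_iff.2 ((prob_compl_eq_zero_iff
      Metric.isClosed_sphere.measurableSet).2 hsphere)) fun x hx => by simpa using hx
  have hdt : (d : ℝ) * (L / √d) ^ 2 = L ^ 2 := by
    rw [div_pow, sq_sqrt (by positivity)]; field_simp
  calc _ ≤ Fintype.card (Fin m) * Fintype.card (Fin m) * ENNReal.ofReal (exp (-(L ^ 2 / 4))) :=
        measure_exists_ne_le _ fun i j hij =>
          (measure_pi_lt_abs_inner_le hμ hrot hij (t := L / √d) (by positivity) _).trans
            (by
              rw [Fintype.card_fin, hdt]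
              exact ENNReal.ofReal_le_ofReal (div_sq_pow_ceil_le_exp hL))
    _ = ENNReal.ofReal (m * m * exp (-(L ^ 2 / 4))) := by
        rw [ENNReal.ofReal_mul (by positivity), ENNReal.ofReal_mul (by positivity),
          ENNReal.ofReal_natCast, Fintype.card_fin]
    _ ≤ ENNReal.ofReal ((d : ℝ) ^ (2 * k + 1 - L / 4)) :=
        ENNReal.ofReal_le_ofReal (mul_self_mul_exp_le_rpow hd1 m.cast_nonneg hmd)

/-- for `m ≤ d^k` i.i.d. uniform points on the unit sphere in `ℝ^d`
(`μ` is the uniform, i.e. rotation-invariant, probability measure on the sphere),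
the probability that some pair has inner product larger than `ln(d)/√d` in
absolute value is at most `d^(2k+1-ln(d)/4)`. -/
theorem pairwise_inner_log_small_whp (d : ℕ) (hd : 6 ≤ d) (k : ℝ) (hk : 1 ≤ k)
    (m : ℕ) (hm : 1 ≤ m) (hmd : (m : ℝ) ≤ (d : ℝ) ^ k)
    (μ : Measure (EuclideanSpace ℝ (Fin d))) [IsProbabilityMeasure μ]
    (hsphere : μ (Metric.sphere (0 : EuclideanSpace ℝ (Fin d)) 1) = 1)
    (hrot : ∀ R : EuclideanSpace ℝ (Fin d) ≃ₗᵢ[ℝ] EuclideanSpace ℝ (Fin d),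
      Measure.map R μ = μ) :
    (Measure.pi fun _ : Fin m => μ)
        {x : Fin m → EuclideanSpace ℝ (Fin d) |
          ∃ i j, i ≠ j ∧ Real.log d / Real.sqrt d < |⟪x i, x j⟫_ℝ|} ≤
      ENNReal.ofReal ((d : ℝ) ^ (2 * k + 1 - Real.log d / 4)) :=
  pairwise_inner_log_small_whp_general d hd k hk m hmd μ hsphere hrot
end

section
/- Assume the KKT setup with dataset size m, and additionally: m·(p+1) ≤ (d+1)/3, and there is c ∈ (0,1] with |I^+| ≥ c·m and |I^−| ≥ c·m. Then there exists η > 0 such that the vector z := η · Σ_{i=1}^m y_i x_i satisfies ‖z‖ ≤ 18·√(2d)/(c·√m), N_θ(x_i − z) ≤ −1 for every i ∈ I^+, and N_θ(x_i + z) ≥ 1 for every i ∈ I^−. -/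
/-!
Under the KKT identities every neuron is affine in the dual variables:
`⟪w j, ξ⟫ + b j = v j * (⟪u j, ξ⟫ + β j)` with `u j = ∑ₗ λₗ yₗ sₗⱼ xₗ` and `β j = ∑ₗ λₗ yₗ sₗⱼ`
(`dualWeight`, `dualBias`). As the data are nearly orthogonal, `|⟪u j, x i⟫ + β j|` is at most
the diagonal term `(d + 1) λᵢ sᵢⱼ` plus `(p + 1) Aⱼ`, where `Aⱼ = ∑ₗ λₗ sₗⱼ` (`dualMass`), and
`z = ∑ₗ yₗ xₗ` satisfies `yₗ ⟪xₗ, z⟫ ≥ 2(d + 1)/3` for all `l`, so `⟪u j, z⟫ ≥ 2(d + 1)/3 · Aⱼ`.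
Hence at `x i - η z`, for a positive point `x i`, the neurons with `v j ≥ 0` contribute no more
than at `x i` (nothing at all if `λᵢ = 0`), while those with `v j < 0` lose at least
`(2η(d + 1)/3 - (p + 1)) v j² Aⱼ`. In total this loss is large because `∑_{v j < 0} v j² Aⱼ`
(`negMass`) is at least `3 c m / (4 (d + 1))`: the negative neurons alone must give each of the
`≥ c m` negative points margin `1`. Negative points follow by the symmetry `(y, v) ↦ (-y, -v)`.
-/

open InnerProductSpace Finset

theorem mul_max_zero_mul_add_le {v S P D E : ℝ} (hD : 0 ≤ D) (hE : 0 ≤ E)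
    (hP : P + E + D ≤ S) (hS : v * S < 0 → S ≤ E) :
    v * max 0 (v * P) + (if v < 0 then v ^ 2 * D else 0) ≤ v * max 0 (v * S) := by
  split_ifs with hv
  · have hvP : v * max 0 (v * P) ≤ v * (v * P) :=
      mul_le_mul_of_nonpos_left (le_max_right _ _) hv.le
    rcases lt_or_ge (v * S) 0 with hvS | hvS
    · rw [max_eq_left hvS.le]
      nlinarith [hS hvS]
    · rw [max_eq_right hvS]
      nlinarith
  · rw [not_lt] at hv
    rw [add_zero]
    gcongr
    linarith

section Data

variable {d m : ℕ} {x : Fin m → EuclideanSpace ℝ (Fin d)} {y : Fin m → ℝ} {p : ℝ}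

theorem abs_mul_inner_sum_smul_sub_le (hy : ∀ i, |y i| = 1) (hx : ∀ i, ‖x i‖ = √d)
    (hp0 : 0 ≤ p) (hp : ∀ i j, i ≠ j → |⟪x i, x j⟫_ℝ| ≤ p) (l : Fin m) :
    |y l * ⟪x l, ∑ r, y r • x r⟫_ℝ - d| ≤ m * p := by
  have hdiag : y l * (y l * ⟪x l, x l⟫_ℝ) = d := by
    rw [← mul_assoc, ← abs_mul_abs_self, hy l, one_mul, real_inner_self_eq_norm_sq, hx l,
      Real.sq_sqrt (Nat.cast_nonneg d), one_mul]
  have hsplit : y l * ⟪x l, ∑ r, y r • x r⟫_ℝ - d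
      = ∑ r ∈ univ.erase l, y l * (y r * ⟪x l, x r⟫_ℝ) := by
    rw [inner_sum, mul_sum, ← add_sum_erase _ _ (mem_univ l)]
    simp only [real_inner_smul_right, hdiag, add_sub_cancel_left]
  rw [hsplit]
  calc _ ≤ ∑ r ∈ univ.erase l, |y l * (y r * ⟪x l, x r⟫_ℝ)| := abs_sum_le_sum_abs _ _
    _ ≤ ∑ r ∈ univ.erase l, p := sum_le_sum fun r hr => by
        rw [abs_mul, abs_mul, hy, hy, one_mul, one_mul]
        exact hp l r (ne_of_mem_erase hr).symm
    _ ≤ ∑ _r : Fin m, p := sum_le_sum_of_subset_of_nonneg (erase_subset _ _) fun _ _ _ => hp0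
    _ = m * p := by simp

theorem norm_sum_smul_sq_le (hy : ∀ i, |y i| = 1) (hx : ∀ i, ‖x i‖ = √d)
    (hp0 : 0 ≤ p) (hp : ∀ i j, i ≠ j → |⟪x i, x j⟫_ℝ| ≤ p) :
    ‖∑ r, y r • x r‖ ^ 2 ≤ m * (d + m * p) := by
  rw [← real_inner_self_eq_norm_sq, sum_inner]
  calc ∑ l, ⟪y l • x l, ∑ r, y r • x r⟫_ℝ = ∑ l, y l * ⟪x l, ∑ r, y r • x r⟫_ℝ := by
        simp only [real_inner_smul_left]
    _ ≤ ∑ _l : Fin m, (d + m * p : ℝ) := sum_le_sum fun l _ =>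
        by linarith [(abs_le.1 (abs_mul_inner_sum_smul_sub_le hy hx hp0 hp l)).2]
    _ = m * (d + m * p) := by simp [mul_add]

theorem norm_smul_sum_smul_le (hy : ∀ i, |y i| = 1) (hx : ∀ i, ‖x i‖ = √d)
    (hp0 : 0 ≤ p) (hp : ∀ i j, i ≠ j → |⟪x i, x j⟫_ℝ| ≤ p)
    (hmp : (m : ℝ) * (p + 1) ≤ ((d : ℝ) + 1) / 3) {c : ℝ} (hc0 : 0 < c) (hc1 : c ≤ 1) :
    ‖(8 / (c * m) + 3 * (p + 1) / ((d : ℝ) + 1)) • ∑ r, y r • x r‖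
      ≤ 18 * √(2 * d) / (c * √m) := by
  rcases Nat.eq_zero_or_pos m with rfl | hm
  · simp
  have hm1 : (1 : ℝ) ≤ m := by exact_mod_cast hm
  have hη : 8 / (c * m) + 3 * (p + 1) / ((d : ℝ) + 1) ≤ 9 / (c * m) := by
    have : 3 * (p + 1) / ((d : ℝ) + 1) ≤ 1 / (c * m) := by
      rw [div_le_div_iff₀ (by positivity) (by positivity)]
      have hpm : 0 ≤ (p + 1) * m := by positivity
      nlinarith [mul_nonneg hpm (sub_nonneg.2 hc1)]
    linarith [show (8 : ℝ) / (c * m) + 1 / (c * m) = 9 / (c * m) by ring]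
  have hz : ‖∑ r, y r • x r‖ ≤ √m * √(2 * d) := by
    rw [← Real.sqrt_mul (Nat.cast_nonneg m), Real.le_sqrt (norm_nonneg _) (by positivity)]
    nlinarith [norm_sum_smul_sq_le hy hx hp0 hp]
  calc _ = (8 / (c * m) + 3 * (p + 1) / ((d : ℝ) + 1)) * ‖∑ r, y r • x r‖ := by
        rw [norm_smul, Real.norm_of_nonneg (by positivity)]
    _ ≤ 9 / (c * m) * (√m * √(2 * d)) := mul_le_mul hη hz (norm_nonneg _) (by positivity)
    _ = 9 * √(2 * d) / (c * √m) := by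
        field_simp
        rw [Real.sq_sqrt (Nat.cast_nonneg m)]
    _ ≤ 18 * √(2 * d) / (c * √m) := by gcongr; norm_num

end Data

section KKT

variable {d m k : ℕ}

noncomputable def dualWeight (x : Fin m → EuclideanSpace ℝ (Fin d)) (y lam : Fin m → ℝ)
    (s : Fin m → Fin k → ℝ) (j : Fin k) : EuclideanSpace ℝ (Fin d) :=
  ∑ l, (lam l * y l * s l j) • x l

def dualBias (y lam : Fin m → ℝ) (s : Fin m → Fin k → ℝ) (j : Fin k) : ℝ :=
  ∑ l, lam l * y l * s l j

def dualMass (lam : Fin m → ℝ) (s : Fin m → Fin k → ℝ) (j : Fin k) : ℝ :=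
  ∑ l, lam l * s l j

noncomputable def negMass (v : Fin k → ℝ) (lam : Fin m → ℝ) (s : Fin m → Fin k → ℝ) : ℝ :=
  ∑ j ∈ univ.filter (fun j => v j < 0), v j ^ 2 * dualMass lam s j

/-- The KKT conditions (i)–(v), with (iii) relaxed to: `s i j` is nonnegative and vanishes
where neuron `j` is inactive at `x i`. -/
structure IsKKTPoint (x : Fin m → EuclideanSpace ℝ (Fin d)) (y : Fin m → ℝ)
    (w : Fin k → EuclideanSpace ℝ (Fin d)) (b v : Fin k → ℝ) (lam : Fin m → ℝ)
    (s : Fin m → Fin k → ℝ) : Prop where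
  abs_label : ∀ i, |y i| = 1
  lam_nonneg : ∀ i, 0 ≤ lam i
  act_nonneg : ∀ i j, 0 ≤ s i j
  one_le_margin : ∀ i, 1 ≤ y i * net w b v (x i)
  lam_eq_zero : ∀ i, y i * net w b v (x i) ≠ 1 → lam i = 0
  act_eq_zero : ∀ i j, ⟪w j, x i⟫_ℝ + b j < 0 → s i j = 0
  weight_eq : ∀ j, w j = ∑ i, (lam i * y i * v j * s i j) • x i
  bias_eq : ∀ j, b j = ∑ i, lam i * y i * v j * s i j

theorem net_neg_outer (w : Fin k → EuclideanSpace ℝ (Fin d)) (b v : Fin k → ℝ)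
    (ξ : EuclideanSpace ℝ (Fin d)) : net w b (-v) ξ = -net w b v ξ := by
  simp [net, sum_neg_distrib]

theorem inner_dualWeight_add_dualBias (x : Fin m → EuclideanSpace ℝ (Fin d))
    (y lam : Fin m → ℝ) (s : Fin m → Fin k → ℝ) (i : Fin m) (j : Fin k) :
    ⟪dualWeight x y lam s j, x i⟫_ℝ + dualBias y lam s j
      = ∑ l, lam l * y l * s l j * (⟪x l, x i⟫_ℝ + 1) := by
  simp only [dualWeight, dualBias, sum_inner, real_inner_smul_left, ← sum_add_distrib, mul_add,
    mul_one]

variable {x : Fin m → EuclideanSpace ℝ (Fin d)} {y : Fin m → ℝ}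
  {w : Fin k → EuclideanSpace ℝ (Fin d)} {b v : Fin k → ℝ} {lam : Fin m → ℝ}
  {s : Fin m → Fin k → ℝ} {p : ℝ}

namespace IsKKTPoint

theorem neg (h : IsKKTPoint x y w b v lam s) : IsKKTPoint x (-y) w b (-v) lam s where
  abs_label i := by simpa using h.abs_label i
  lam_nonneg := h.lam_nonneg
  act_nonneg := h.act_nonneg
  one_le_margin i := by simpa [net_neg_outer] using h.one_le_margin i
  lam_eq_zero i hi := h.lam_eq_zero i (by simpa [net_neg_outer] using hi)
  act_eq_zero := h.act_eq_zero
  weight_eq j := by simpa using h.weight_eq j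
  bias_eq j := by simpa using h.bias_eq j

theorem dualMass_nonneg (h : IsKKTPoint x y w b v lam s) (j : Fin k) :
    0 ≤ dualMass lam s j :=
  sum_nonneg fun l _ => mul_nonneg (h.lam_nonneg l) (h.act_nonneg l j)

theorem negMass_nonneg (h : IsKKTPoint x y w b v lam s) : 0 ≤ negMass v lam s :=
  sum_nonneg fun j _ => mul_nonneg (sq_nonneg _) (h.dualMass_nonneg j)

theorem inner_add_bias_eq (h : IsKKTPoint x y w b v lam s) (j : Fin k)
    (ξ : EuclideanSpace ℝ (Fin d)) :
    ⟪w j, ξ⟫_ℝ + b j = v j * (⟪dualWeight x y lam s j, ξ⟫_ℝ + dualBias y lam s j) := by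
  simp only [h.weight_eq j, h.bias_eq j, dualWeight, dualBias, sum_inner, real_inner_smul_left,
    mul_add, mul_sum, ← sum_add_distrib]
  exact sum_congr rfl fun l _ => by ring

theorem net_eq (h : IsKKTPoint x y w b v lam s) (ξ : EuclideanSpace ℝ (Fin d)) :
    net w b v ξ
      = ∑ j, v j * max 0 (v j * (⟪dualWeight x y lam s j, ξ⟫_ℝ + dualBias y lam s j)) := by
  simp only [net, h.inner_add_bias_eq]

theorem abs_inner_dualWeight_add_dualBias_le (h : IsKKTPoint x y w b v lam s)
    (hx : ∀ i, ‖x i‖ = √d) (hp0 : 0 ≤ p) (hp : ∀ i j, i ≠ j → |⟪x i, x j⟫_ℝ| ≤ p)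
    (i : Fin m) (j : Fin k) :
    |⟪dualWeight x y lam s j, x i⟫_ℝ + dualBias y lam s j|
      ≤ (d + 1) * (lam i * s i j) + (p + 1) * dualMass lam s j := by
  have hls : ∀ l, 0 ≤ lam l * s l j := fun l => mul_nonneg (h.lam_nonneg l) (h.act_nonneg l j)
  have hterm : ∀ l, |lam l * y l * s l j * (⟪x l, x i⟫_ℝ + 1)|
      = lam l * s l j * |⟪x l, x i⟫_ℝ + 1| := fun l => by
    rw [abs_mul, abs_mul, abs_mul, h.abs_label, abs_of_nonneg (h.lam_nonneg l),
      abs_of_nonneg (h.act_nonneg l j), mul_one]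
  have hdiag : |⟪x i, x i⟫_ℝ + 1| = d + 1 := by
    rw [real_inner_self_eq_norm_sq, hx, Real.sq_sqrt (Nat.cast_nonneg d)]
    exact abs_of_nonneg (by positivity)
  rw [inner_dualWeight_add_dualBias, ← add_sum_erase _ _ (mem_univ i)]
  refine (abs_add_le _ _).trans (add_le_add (by rw [hterm, hdiag, mul_comm]) ?_)
  calc _ ≤ ∑ l ∈ univ.erase i, |lam l * y l * s l j * (⟪x l, x i⟫_ℝ + 1)| :=
        abs_sum_le_sum_abs _ _
    _ ≤ ∑ l ∈ univ.erase i, (p + 1) * (lam l * s l j) := sum_le_sum fun l hl => by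
        rw [hterm, mul_comm]
        refine mul_le_mul_of_nonneg_right ((abs_add_le _ _).trans ?_) (hls l)
        rw [abs_one]
        linarith [hp l i (ne_of_mem_erase hl)]
    _ ≤ ∑ l, (p + 1) * (lam l * s l j) := sum_le_sum_of_subset_of_nonneg (erase_subset _ _)
        fun l _ _ => mul_nonneg (by linarith) (hls l)
    _ = (p + 1) * dualMass lam s j := by rw [dualMass, mul_sum]

theorem mul_dualMass_le_inner_dualWeight (h : IsKKTPoint x y w b v lam s)
    {z : EuclideanSpace ℝ (Fin d)} {U : ℝ} (hz : ∀ l, U ≤ y l * ⟪x l, z⟫_ℝ) (j : Fin k) :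
    U * dualMass lam s j ≤ ⟪dualWeight x y lam s j, z⟫_ℝ := by
  rw [dualMass, dualWeight, mul_sum, sum_inner]
  refine sum_le_sum fun l _ => ?_
  rw [real_inner_smul_left]
  nlinarith [mul_le_mul_of_nonneg_left (hz l) (mul_nonneg (h.lam_nonneg l) (h.act_nonneg l j))]

theorem one_le_sum_of_label_eq_neg_one (h : IsKKTPoint x y w b v lam s)
    (hx : ∀ i, ‖x i‖ = √d) (hp0 : 0 ≤ p) (hp : ∀ i j, i ≠ j → |⟪x i, x j⟫_ℝ| ≤ p)
    {i : Fin m} (hi : y i = -1) :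
    1 ≤ ∑ j ∈ univ.filter (fun j => v j < 0),
      v j ^ 2 * ((d + 1) * (lam i * s i j) + (p + 1) * dualMass lam s j) := by
  have hnet : 1 ≤ -net w b v (x i) := by simpa [hi] using h.one_le_margin i
  rw [h.net_eq, ← sum_neg_distrib] at hnet
  refine hnet.trans ?_
  rw [sum_filter]
  refine sum_le_sum fun j _ => ?_
  have hS := h.abs_inner_dualWeight_add_dualBias_le hx hp0 hp i j
  set S := ⟪dualWeight x y lam s j, x i⟫_ℝ + dualBias y lam s j
  split_ifs with hv
  · rcases le_total 0 (v j * S) with hvS | hvS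
    · rw [max_eq_right hvS]
      nlinarith [neg_abs_le S, sq_nonneg (v j)]
    · rw [max_eq_left hvS]
      nlinarith [abs_nonneg S, sq_nonneg (v j)]
  · exact neg_nonpos.2 (mul_nonneg (not_lt.1 hv) (le_max_left _ _))

theorem card_le_negMass (h : IsKKTPoint x y w b v lam s)
    (hx : ∀ i, ‖x i‖ = √d) (hp0 : 0 ≤ p) (hp : ∀ i j, i ≠ j → |⟪x i, x j⟫_ℝ| ≤ p) :
    (#{i | y i = -1} : ℝ) ≤ (d + 1 + #{i | y i = -1} * (p + 1)) * negMass v lam s := by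
  set I := univ.filter fun i => y i = -1
  set J := univ.filter fun j => v j < 0
  calc (#I : ℝ) = ∑ i ∈ I, (1 : ℝ) := by simp
    _ ≤ ∑ i ∈ I, ∑ j ∈ J, v j ^ 2 * ((d + 1) * (lam i * s i j) + (p + 1) * dualMass lam s j) :=
        sum_le_sum fun i hi => h.one_le_sum_of_label_eq_neg_one hx hp0 hp (mem_filter.1 hi).2
    _ = ∑ j ∈ J, v j ^ 2 * ((d + 1) * ∑ i ∈ I, lam i * s i j
          + #I * (p + 1) * dualMass lam s j) := by
        rw [sum_comm]
        refine sum_congr rfl fun j _ => ?_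
        rw [← mul_sum, sum_add_distrib, ← mul_sum, sum_const, nsmul_eq_mul]
        ring
    _ ≤ ∑ j ∈ J, v j ^ 2 * ((d + 1) * dualMass lam s j + #I * (p + 1) * dualMass lam s j) := by
        refine sum_le_sum fun j _ => ?_
        gcongr
        exact sum_le_sum_of_subset_of_nonneg (filter_subset _ _)
          fun l _ _ => mul_nonneg (h.lam_nonneg l) (h.act_nonneg l j)
    _ = (d + 1 + #I * (p + 1)) * negMass v lam s := by
        rw [negMass, mul_sum]
        exact sum_congr rfl fun j _ => by ring

theorem mul_max_zero_sub_smul_add_le (h : IsKKTPoint x y w b v lam s)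
    (hx : ∀ i, ‖x i‖ = √d) (hp0 : 0 ≤ p) (hp : ∀ i j, i ≠ j → |⟪x i, x j⟫_ℝ| ≤ p)
    (i : Fin m) {z : EuclideanSpace ℝ (Fin d)} {η U : ℝ} (hη : 0 ≤ η)
    (hz : ∀ l, U ≤ y l * ⟪x l, z⟫_ℝ) (hηU : p + 1 ≤ η * U) (j : Fin k) :
    v j * max 0 (v j * (⟪dualWeight x y lam s j, x i - η • z⟫_ℝ + dualBias y lam s j))
        + (if v j < 0 then v j ^ 2 * ((η * U - (p + 1)) * dualMass lam s j) else 0)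
      ≤ if lam i = 0 then 0
        else v j * max 0 (v j * (⟪dualWeight x y lam s j, x i⟫_ℝ + dualBias y lam s j)) := by
  have hA := h.dualMass_nonneg j
  have hD : 0 ≤ (η * U - (p + 1)) * dualMass lam s j := mul_nonneg (by linarith) hA
  have hE : 0 ≤ (p + 1) * dualMass lam s j := mul_nonneg (by linarith) hA
  have hS := le_of_abs_le (h.abs_inner_dualWeight_add_dualBias_le hx hp0 hp i j)
  have hshift : ⟪dualWeight x y lam s j, x i - η • z⟫_ℝ + dualBias y lam s j
      + (p + 1) * dualMass lam s j + (η * U - (p + 1)) * dualMass lam s j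
      ≤ ⟪dualWeight x y lam s j, x i⟫_ℝ + dualBias y lam s j := by
    have hT := mul_le_mul_of_nonneg_left (h.mul_dualMass_le_inner_dualWeight hz j) hη
    rw [inner_sub_right, real_inner_smul_right]
    linarith
  by_cases hlam : lam i = 0
  · rw [if_pos hlam]
    rw [hlam, zero_mul, mul_zero, zero_add] at hS
    -- the shifted preactivation is then at most `-(η U - (p + 1)) Aⱼ`, so compare with `S = 0`
    simpa using mul_max_zero_mul_add_le (v := v j) (S := 0) hD le_rfl (by linarith) (by simp)
  · rw [if_neg hlam]
    refine mul_max_zero_mul_add_le hD hE hshift fun hvS => ?_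
    rw [← h.inner_add_bias_eq] at hvS
    simpa [h.act_eq_zero i j hvS] using hS

theorem net_sub_smul_add_le (h : IsKKTPoint x y w b v lam s)
    (hx : ∀ i, ‖x i‖ = √d) (hp0 : 0 ≤ p) (hp : ∀ i j, i ≠ j → |⟪x i, x j⟫_ℝ| ≤ p)
    {i : Fin m} (hi : y i = 1) {z : EuclideanSpace ℝ (Fin d)} {η U : ℝ} (hη : 0 ≤ η)
    (hz : ∀ l, U ≤ y l * ⟪x l, z⟫_ℝ) (hηU : p + 1 ≤ η * U) :
    net w b v (x i - η • z) + (η * U - (p + 1)) * negMass v lam s ≤ 1 := by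
  have hsupport : (if lam i = 0 then 0 else net w b v (x i)) ≤ 1 := by
    split_ifs with hlam
    · exact zero_le_one
    · by_contra hne
      exact hlam (h.lam_eq_zero i (by rw [hi, one_mul]; exact fun h1 => hne h1.le))
  have hsum := sum_le_sum fun j (_ : j ∈ univ) =>
    h.mul_max_zero_sub_smul_add_le hx hp0 hp i hη hz hηU j
  have hneg : ∑ j ∈ univ.filter (fun j => v j < 0),
      v j ^ 2 * ((η * U - (p + 1)) * dualMass lam s j) = (η * U - (p + 1)) * negMass v lam s := by
    rw [negMass, mul_sum]
    exact sum_congr rfl fun j _ => by ring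
  rw [sum_add_distrib, ← sum_filter, hneg, sum_ite_irrel, sum_const_zero] at hsum
  rw [h.net_eq] at hsupport ⊢
  linarith

theorem net_sub_smul_sum_le_neg_one (h : IsKKTPoint x y w b v lam s)
    (hx : ∀ i, ‖x i‖ = √d) (hp0 : 0 ≤ p) (hp : ∀ i j, i ≠ j → |⟪x i, x j⟫_ℝ| ≤ p)
    (hmp : (m : ℝ) * (p + 1) ≤ ((d : ℝ) + 1) / 3) {c : ℝ} (hc0 : 0 < c)
    (hIm : c * m ≤ #{i | y i = -1}) {η : ℝ} (hη : 8 / (c * m) + 3 * (p + 1) / ((d : ℝ) + 1) ≤ η)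
    {i : Fin m} (hi : y i = 1) :
    net w b v (x i - η • ∑ l, y l • x l) ≤ -1 := by
  have hm : (1 : ℝ) ≤ m := by exact_mod_cast i.pos
  have hcm : 0 < c * m := by positivity
  have hz : ∀ l, 2 * ((d : ℝ) + 1) / 3 ≤ y l * ⟪x l, ∑ r, y r • x r⟫_ℝ := fun l => by
    linarith [(abs_le.1 (abs_mul_inner_sum_smul_sub_le h.abs_label hx hp0 hp l)).1]
  have hηU : 8 / (c * m) * (2 * (d + 1) / 3) + 2 * (p + 1) ≤ η * (2 * (d + 1) / 3) := by
    have hr : 3 * (p + 1) / ((d : ℝ) + 1) * (2 * (d + 1) / 3) = 2 * (p + 1) := by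
      field_simp
    nlinarith [mul_le_mul_of_nonneg_right hη (by positivity : (0 : ℝ) ≤ 2 * (d + 1) / 3)]
  have hB : 3 * (c * m) ≤ 4 * ((d + 1) * negMass v lam s) := by
    have hcard : (#{i | y i = -1} : ℝ) * (p + 1) ≤ (d + 1) / 3 := by
      refine le_trans (mul_le_mul_of_nonneg_right ?_ (by linarith)) hmp
      exact_mod_cast (card_filter_le _ _).trans (card_fin m).le
    nlinarith [h.card_le_negMass hx hp0 hp, h.negMass_nonneg,
      mul_le_mul_of_nonneg_right hcard h.negMass_nonneg]
  have hmass : 2 ≤ (η * (2 * (d + 1) / 3) - (p + 1)) * negMass v lam s := by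
    have h8 : 8 / (c * m) * (c * m) = 8 := div_mul_cancel₀ _ hcm.ne'
    linarith [mul_le_mul_of_nonneg_left hB (by positivity : (0 : ℝ) ≤ 8 / (c * m)),
      mul_le_mul_of_nonneg_right hηU h.negMass_nonneg, h.negMass_nonneg,
      mul_nonneg hp0 h.negMass_nonneg]
  have hη0 : 0 ≤ η := le_trans (add_nonneg (by positivity) (div_nonneg (by linarith)
    (by positivity))) hη
  linarith [h.net_sub_smul_add_le hx hp0 hp hi hη0 hz (by nlinarith)]

end IsKKTPoint

end KKT

theorem kkt_networks_nonrobust_general (d m k : ℕ)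
    (x : Fin m → EuclideanSpace ℝ (Fin d)) (y : Fin m → ℝ)
    (w : Fin k → EuclideanSpace ℝ (Fin d)) (b v : Fin k → ℝ)
    (lam : Fin m → ℝ) (s : Fin m → Fin k → ℝ) (p : ℝ)
    (hy : ∀ i, y i = 1 ∨ y i = -1)
    (hx : ∀ i, ‖x i‖ = Real.sqrt d)
    (hp0 : 0 ≤ p)
    (hp : ∀ i j, i ≠ j → |⟪x i, x j⟫_ℝ| ≤ p)
    (hlam : ∀ i, 0 ≤ lam i)
    (hs01 : ∀ i j, s i j ∈ Set.Icc (0 : ℝ) 1)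
    (hmargin : ∀ i, 1 ≤ y i * net w b v (x i))
    (hcomp : ∀ i, y i * net w b v (x i) ≠ 1 → lam i = 0)
    (hs0 : ∀ i j, ⟪w j, x i⟫_ℝ + b j < 0 → s i j = 0)
    (hw : ∀ j, w j = ∑ i, (lam i * y i * v j * s i j) • x i)
    (hb : ∀ j, b j = ∑ i, lam i * y i * v j * s i j)
    (hmp : (m : ℝ) * (p + 1) ≤ ((d : ℝ) + 1) / 3)
    (c : ℝ) (hc0 : 0 < c) (hc1 : c ≤ 1)
    (hIp : c * m ≤ ((Finset.univ.filter fun i => y i = 1).card : ℝ))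
    (hIm : c * m ≤ ((Finset.univ.filter fun i => y i = -1).card : ℝ)) :
    ∃ η : ℝ, 0 < η ∧
      ‖η • ∑ i, y i • x i‖ ≤ 18 * Real.sqrt (2 * d) / (c * Real.sqrt m) ∧
      (∀ i, y i = 1 → net w b v (x i - η • ∑ l, y l • x l) ≤ -1) ∧
      (∀ i, y i = -1 → 1 ≤ net w b v (x i + η • ∑ l, y l • x l)) := by
  have h : IsKKTPoint x y w b v lam s :=
    ⟨fun i => (abs_eq zero_le_one).2 (hy i), hlam, fun i j => (hs01 i j).1, hmargin, hcomp, hs0,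
      hw, hb⟩
  have hη : 0 < 8 / (c * m) + 3 * (p + 1) / ((d : ℝ) + 1) :=
    add_pos_of_nonneg_of_pos (by positivity) (div_pos (by linarith) (by positivity))
  refine ⟨_, hη, norm_smul_sum_smul_le h.abs_label hx hp0 hp hmp hc0 hc1,
    fun i hi => h.net_sub_smul_sum_le_neg_one hx hp0 hp hmp hc0 hIm le_rfl hi, fun i hi => ?_⟩
  have hIp' : c * m ≤ #{i | (-y) i = -1} := by simpa using hIp
  have hflip := h.neg.net_sub_smul_sum_le_neg_one hx hp0 hp hmp hc0 hIp' le_rfl (i := i)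
    (by simp [hi])
  simp only [Pi.neg_apply, neg_smul, sum_neg_distrib, smul_neg, sub_neg_eq_add,
    net_neg_outer] at hflip
  linarith

/-- under the KKT conditions of the max-margin problem, if
`m(p+1) ≤ (d+1)/3` and both labels make up at least a `c`-fraction of the data,
then there is a single small perturbation `z = η ∑ᵢ yᵢ xᵢ` with
`‖z‖ ≤ 18√(2d)/(c√m)` flipping the margin of every positively labeled point
(when subtracted) and of every negatively labeled point (when added). -/
theorem kkt_networks_nonrobust (d m k : ℕ)
    (x : Fin m → EuclideanSpace ℝ (Fin d)) (y : Fin m → ℝ)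
    (w : Fin k → EuclideanSpace ℝ (Fin d)) (b v : Fin k → ℝ)
    (lam : Fin m → ℝ) (s : Fin m → Fin k → ℝ) (p : ℝ)
    (hy : ∀ i, y i = 1 ∨ y i = -1)
    (hx : ∀ i, ‖x i‖ = Real.sqrt d)
    (hp0 : 0 ≤ p)
    (hp : ∀ i j, i ≠ j → |⟪x i, x j⟫_ℝ| ≤ p)
    (hlam : ∀ i, 0 ≤ lam i)
    (hs01 : ∀ i j, s i j ∈ Set.Icc (0 : ℝ) 1)
    (hmargin : ∀ i, 1 ≤ y i * net w b v (x i))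
    (hcomp : ∀ i, y i * net w b v (x i) ≠ 1 → lam i = 0)
    (hs1 : ∀ i j, 0 < ⟪w j, x i⟫_ℝ + b j → s i j = 1)
    (hs0 : ∀ i j, ⟪w j, x i⟫_ℝ + b j < 0 → s i j = 0)
    (hw : ∀ j, w j = ∑ i, (lam i * y i * v j * s i j) • x i)
    (hb : ∀ j, b j = ∑ i, lam i * y i * v j * s i j)
    (hmp : (m : ℝ) * (p + 1) ≤ ((d : ℝ) + 1) / 3)
    (c : ℝ) (hc0 : 0 < c) (hc1 : c ≤ 1)
    (hIp : c * m ≤ ((Finset.univ.filter fun i => y i = 1).card : ℝ))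
    (hIm : c * m ≤ ((Finset.univ.filter fun i => y i = -1).card : ℝ)) :
    ∃ η : ℝ, 0 < η ∧
      ‖η • ∑ i, y i • x i‖ ≤ 18 * Real.sqrt (2 * d) / (c * Real.sqrt m) ∧
      (∀ i, y i = 1 → net w b v (x i - η • ∑ l, y l • x l) ≤ -1) ∧
      (∀ i, y i = -1 → 1 ≤ net w b v (x i + η • ∑ l, y l • x l)) :=
  kkt_networks_nonrobust_general d m k x y w b v lam s p hy hx hp0 hp hlam hs01 hmargin hcomp hs0 hw
    hb hmp c hc0 hc1 hIp hIm
end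

section
/- Assume the KKT setup with dataset size m, that m·(p+1) ≤ (d+1)/3, and that both labels occur, i.e., I^+ ≠ ∅ and I^− ≠ ∅. Then every example attains margin exactly 1: y_i · N_θ(x_i) = 1 for every i ∈ [m]. -/
open InnerProductSpace Finset

/-- under the KKT conditions, if `m(p+1) ≤ (d+1)/3` and both
labels occur, every example attains margin exactly `1`. -/
theorem kkt_margin_exactly_one (d m k : ℕ)
    (x : Fin m → EuclideanSpace ℝ (Fin d)) (y : Fin m → ℝ)
    (w : Fin k → EuclideanSpace ℝ (Fin d)) (b v : Fin k → ℝ)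
    (lam : Fin m → ℝ) (s : Fin m → Fin k → ℝ) (p : ℝ)
    (hy : ∀ i, y i = 1 ∨ y i = -1)
    (hx : ∀ i, ‖x i‖ = Real.sqrt d)
    (hp0 : 0 ≤ p)
    (hp : ∀ i j, i ≠ j → |⟪x i, x j⟫_ℝ| ≤ p)
    (hlam : ∀ i, 0 ≤ lam i)
    (hs01 : ∀ i j, s i j ∈ Set.Icc (0 : ℝ) 1)
    (hmargin : ∀ i, 1 ≤ y i * net w b v (x i))
    (hcomp : ∀ i, y i * net w b v (x i) ≠ 1 → lam i = 0)
    (hs1 : ∀ i j, 0 < ⟪w j, x i⟫_ℝ + b j → s i j = 1)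
    (hs0 : ∀ i j, ⟪w j, x i⟫_ℝ + b j < 0 → s i j = 0)
    (hw : ∀ j, w j = ∑ i, (lam i * y i * v j * s i j) • x i)
    (hb : ∀ j, b j = ∑ i, lam i * y i * v j * s i j)
    (hmp : (m : ℝ) * (p + 1) ≤ ((d : ℝ) + 1) / 3)
    (hIp : ∃ i, y i = 1) (hIm : ∃ i, y i = -1) :
    ∀ i, y i * net w b v (x i) = 1 := by
  by_contra hcon
  push_neg at hcon
  obtain ⟨i0, hi0⟩ := hcon
  have hd1 : (0:ℝ) < (d:ℝ) + 1 := by positivity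
  have hβ : (0:ℝ) < p + 1 := by linarith
  have hy2 : ∀ i, y i * y i = 1 := by
    intro i; rcases hy i with h | h <;> rw [h] <;> norm_num
  have hyabs : ∀ i, |y i| = 1 := by
    intro i; rcases hy i with h | h <;> rw [h] <;> norm_num
  have hxx : ∀ l : Fin m, ⟪x l, x l⟫_ℝ = (d:ℝ) := by
    intro l
    rw [real_inner_self_eq_norm_sq, hx l, Real.sq_sqrt (by positivity)]
  have hs0le : ∀ i j, 0 ≤ s i j := fun i j => (hs01 i j).1
  have hsle1 : ∀ i j, s i j ≤ 1 := fun i j => (hs01 i j).2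
  -- preactivation expansion
  have hpre : ∀ i j, ⟪w j, x i⟫_ℝ + b j
      = v j * ∑ l, lam l * y l * s l j * (⟪x l, x i⟫_ℝ + 1) := by
    intro i j
    rw [hw j, hb j, sum_inner, ← Finset.sum_add_distrib, Finset.mul_sum]
    apply Finset.sum_congr rfl
    intro l _
    rw [real_inner_smul_left]
    ring
  -- relu via s
  have hrelu : ∀ i j, max 0 (⟪w j, x i⟫_ℝ + b j) = s i j * (⟪w j, x i⟫_ℝ + b j) := by
    intro i j
    rcases lt_trichotomy (⟪w j, x i⟫_ℝ + b j) 0 with h | h | h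
    · rw [hs0 i j h, max_eq_left h.le, zero_mul]
    · rw [h, mul_zero, max_self]
    · rw [hs1 i j h, one_mul, max_eq_right h.le]
  -- network expansion
  have hnet : ∀ i, y i * net w b v (x i)
      = ∑ j, v j ^ 2 * s i j *
          (y i * ∑ l, lam l * y l * s l j * (⟪x l, x i⟫_ℝ + 1)) := by
    intro i
    unfold net
    rw [Finset.mul_sum]
    apply Finset.sum_congr rfl
    intro j _
    rw [hrelu i j, hpre i j]
    ring
  -- the key bound on preactivations
  have hbound : ∀ (i : Fin m) (j : Fin k),
      |y i * (∑ l, lam l * y l * s l j * (⟪x l, x i⟫_ℝ + 1))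
        - ((d:ℝ)+1) * (lam i * s i j)|
      ≤ (p+1) * ((∑ l, lam l * s l j) - lam i * s i j) := by
    intro i j
    have hsplit : y i * (∑ l, lam l * y l * s l j * (⟪x l, x i⟫_ℝ + 1))
          - ((d:ℝ)+1) * (lam i * s i j)
        = ∑ l ∈ Finset.univ.erase i,
            y i * (lam l * y l * s l j * (⟪x l, x i⟫_ℝ + 1)) := by
      rw [Finset.mul_sum, ← Finset.add_sum_erase _ _ (Finset.mem_univ i)]
      have h1 : y i * (lam i * y i * s i j * (⟪x i, x i⟫_ℝ + 1))
          = ((d:ℝ)+1) * (lam i * s i j) := by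
        rw [hxx i]
        linear_combination (lam i * s i j * ((d:ℝ)+1)) * hy2 i
      rw [h1]; ring
    rw [hsplit]
    calc |∑ l ∈ Finset.univ.erase i,
            y i * (lam l * y l * s l j * (⟪x l, x i⟫_ℝ + 1))|
        ≤ ∑ l ∈ Finset.univ.erase i,
            |y i * (lam l * y l * s l j * (⟪x l, x i⟫_ℝ + 1))| :=
          Finset.abs_sum_le_sum_abs _ _
      _ ≤ ∑ l ∈ Finset.univ.erase i, lam l * s l j * (p+1) := by
          apply Finset.sum_le_sum
          intro l hl
          have hne : l ≠ i := (Finset.mem_erase.mp hl).1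
          have h1 : |⟪x l, x i⟫_ℝ + 1| ≤ p + 1 := by
            calc |⟪x l, x i⟫_ℝ + 1| ≤ |⟪x l, x i⟫_ℝ| + |(1:ℝ)| := abs_add_le _ _
              _ ≤ p + 1 := by rw [abs_one]; linarith [hp l i hne]
          have habs : |y i * (lam l * y l * s l j * (⟪x l, x i⟫_ℝ + 1))|
              = lam l * s l j * |⟪x l, x i⟫_ℝ + 1| := by
            rw [abs_mul, abs_mul, abs_mul, abs_mul, hyabs i, hyabs l,
                abs_of_nonneg (hlam l), abs_of_nonneg (hs0le l j)]
            ring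
          rw [habs]
          exact mul_le_mul_of_nonneg_left h1
            (mul_nonneg (hlam l) (hs0le l j))
      _ = (p+1) * ((∑ l, lam l * s l j) - lam i * s i j) := by
          rw [show (∑ l ∈ Finset.univ.erase i, lam l * s l j * (p+1))
              = (p+1) * ∑ l ∈ Finset.univ.erase i, lam l * s l j by
            rw [Finset.mul_sum]; apply Finset.sum_congr rfl; intros; ring]
          rw [Finset.sum_erase_eq_sub (Finset.mem_univ i)]
  -- nonnegativity facts
  have hAnn : ∀ j, (0:ℝ) ≤ ∑ l, lam l * s l j := by
    intro j
    exact Finset.sum_nonneg fun l _ => mul_nonneg (hlam l) (hs0le l j)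
  have hαA : ∀ (i : Fin m) (j : Fin k), lam i * s i j ≤ ∑ l, lam l * s l j := by
    intro i j
    exact Finset.single_le_sum (f := fun l => lam l * s l j)
      (fun l _ => mul_nonneg (hlam l) (hs0le l j)) (Finset.mem_univ i)
  have hR0 : (0:ℝ) ≤ ∑ j, v j ^ 2 * ∑ l, lam l * s l j :=
    Finset.sum_nonneg fun j _ => mul_nonneg (sq_nonneg _) (hAnn j)
  -- support vector inequality
  have hsupp : ∀ i : Fin m, 0 < lam i →
      ((d:ℝ)+1) * (∑ j, v j ^ 2 * (lam i * s i j))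
        ≤ 1 + 2*(p+1) * (∑ j, v j ^ 2 * ∑ l, lam l * s l j) := by
    intro i hli
    have hm1 : y i * net w b v (x i) = 1 := by
      by_contra h
      have := hcomp i h
      linarith
    have key : ∀ j : Fin k, ((d:ℝ)+1) * (v j ^ 2 * (lam i * s i j))
        ≤ v j ^ 2 * s i j *
            (y i * ∑ l, lam l * y l * s l j * (⟪x l, x i⟫_ℝ + 1))
          + 2*(p+1) * (v j ^ 2 * ∑ l, lam l * s l j) := by
      intro j
      rcases lt_trichotomy (⟪w j, x i⟫_ℝ + b j) 0 with hlt | heq | hgt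
      · rw [hs0 i j hlt]
        nlinarith [mul_nonneg (mul_nonneg hβ.le (sq_nonneg (v j))) (hAnn j)]
      · by_cases hv : v j = 0
        · rw [hv]
          have := hAnn j
          nlinarith [hlam i, hs0le i j]
        · have hS : (∑ l, lam l * y l * s l j * (⟪x l, x i⟫_ℝ + 1)) = 0 := by
            have h0 := hpre i j
            rw [heq] at h0
            exact (mul_eq_zero.mp h0.symm).resolve_left hv
          rw [hS, mul_zero, mul_zero]
          have hb' := hbound i j
          rw [hS, mul_zero, zero_sub, abs_neg] at hb'
          have h2 : ((d:ℝ)+1) * (lam i * s i j)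
              ≤ (p+1) * ((∑ l, lam l * s l j) - lam i * s i j) :=
            le_trans (le_abs_self _) hb'
          nlinarith [mul_le_mul_of_nonneg_left h2 (sq_nonneg (v j)),
            mul_nonneg (mul_nonneg hβ.le (sq_nonneg (v j)))
              (sub_nonneg.mpr (hαA i j)),
            mul_nonneg (mul_nonneg hβ.le (sq_nonneg (v j)))
              (mul_nonneg (hlam i) (hs0le i j)),
            mul_nonneg (mul_nonneg hβ.le (sq_nonneg (v j))) (hAnn j)]
      · have hs' := hs1 i j hgt
        have hb' := hbound i j
        have hge : ((d:ℝ)+1) * (lam i * s i j)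
            - (p+1) * ((∑ l, lam l * s l j) - lam i * s i j)
            ≤ y i * ∑ l, lam l * y l * s l j * (⟪x l, x i⟫_ℝ + 1) := by
          have := (abs_le.mp hb').1
          linarith
        rw [hs']
        rw [hs'] at hge
        nlinarith [mul_le_mul_of_nonneg_left hge (sq_nonneg (v j)),
          mul_nonneg (mul_nonneg hβ.le (sq_nonneg (v j)))
            (sub_nonneg.mpr (by simpa [hs'] using hαA i j)),
          mul_nonneg (mul_nonneg hβ.le (sq_nonneg (v j)))
            (mul_nonneg hli.le (by norm_num : (0:ℝ) ≤ 1))]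
    have hsum := Finset.sum_le_sum (fun j (_ : j ∈ Finset.univ) => key j)
    rw [Finset.sum_add_distrib, ← Finset.mul_sum, ← Finset.mul_sum] at hsum
    rw [← hnet i, hm1] at hsum
    exact hsum
  -- global inequality
  have hglobal : ((d:ℝ)+1) * (∑ j, v j ^ 2 * ∑ l, lam l * s l j)
      ≤ (m:ℝ) * (1 + 2*(p+1) * (∑ j, v j ^ 2 * ∑ l, lam l * s l j)) := by
    have hswap : (∑ j, v j ^ 2 * ∑ l, lam l * s l j)
        = ∑ i : Fin m, ∑ j, v j ^ 2 * (lam i * s i j) := by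
      rw [Finset.sum_comm]
      apply Finset.sum_congr rfl
      intro j _
      rw [Finset.mul_sum]
    calc ((d:ℝ)+1) * (∑ j, v j ^ 2 * ∑ l, lam l * s l j)
        = ∑ i : Fin m, ((d:ℝ)+1) * (∑ j, v j ^ 2 * (lam i * s i j)) := by
          rw [hswap, Finset.mul_sum]
      _ ≤ ∑ _i : Fin m, (1 + 2*(p+1) * (∑ j, v j ^ 2 * ∑ l, lam l * s l j)) := by
          apply Finset.sum_le_sum
          intro i _
          rcases (hlam i).eq_or_lt with h0 | hpos
          · have : (∑ j, v j ^ 2 * (lam i * s i j)) = 0 := by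
              apply Finset.sum_eq_zero
              intro j _
              rw [← h0]
              ring
            rw [this, mul_zero]
            nlinarith [hR0]
          · exact hsupp i hpos
      _ = (m:ℝ) * (1 + 2*(p+1) * (∑ j, v j ^ 2 * ∑ l, lam l * s l j)) := by
          rw [Finset.sum_const, Finset.card_univ, Fintype.card_fin,
            nsmul_eq_mul]
  -- the non-support point i0
  have hlam0 : lam i0 = 0 := hcomp i0 hi0
  have hgt1 : 1 < y i0 * net w b v (x i0) := lt_of_le_of_ne (hmargin i0) (Ne.symm hi0)
  have hup : y i0 * net w b v (x i0)
      ≤ (p+1) * (∑ j, v j ^ 2 * ∑ l, lam l * s l j) := by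
    rw [hnet i0]
    calc (∑ j, v j ^ 2 * s i0 j *
            (y i0 * ∑ l, lam l * y l * s l j * (⟪x l, x i0⟫_ℝ + 1)))
        ≤ ∑ j, v j ^ 2 * ((p+1) * ∑ l, lam l * s l j) := by
          apply Finset.sum_le_sum
          intro j _
          have hb' := hbound i0 j
          simp only [hlam0, zero_mul, mul_zero, sub_zero] at hb'
          have h1 : y i0 * (∑ l, lam l * y l * s l j * (⟪x l, x i0⟫_ℝ + 1))
              ≤ (p+1) * ∑ l, lam l * s l j :=
            le_trans (le_abs_self _) hb'
          nlinarith [mul_le_mul_of_nonneg_left h1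
              (mul_nonneg (sq_nonneg (v j)) (hs0le i0 j)),
            mul_le_mul_of_nonneg_right (hsle1 i0 j)
              (mul_nonneg (sq_nonneg (v j)) (mul_nonneg hβ.le (hAnn j))),
            mul_nonneg (sq_nonneg (v j)) (mul_nonneg hβ.le (hAnn j))]
      _ = (p+1) * (∑ j, v j ^ 2 * ∑ l, lam l * s l j) := by
          rw [Finset.mul_sum]
          apply Finset.sum_congr rfl
          intros
          ring
  have h1R : 1 < (p+1) * (∑ j, v j ^ 2 * ∑ l, lam l * s l j) :=
    lt_of_lt_of_le hgt1 hup
  nlinarith [mul_le_mul_of_nonneg_left hglobal hβ.le,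
    mul_le_mul_of_nonneg_right hmp
      (mul_nonneg hβ.le hR0),
    mul_lt_mul_of_pos_left h1R (show (0:ℝ) < ((d:ℝ)+1)/3 by linarith),
    hmp, hR0, hβ, hd1]
end

section
/- Assume the KKT setup with dataset size m, and that |I^+| ≥ c·m and |I^−| ≥ c·m for some c ∈ (0,1]. Set c' := m(p+1)/(d+1). Then Σ_{i=1}^m Σ_{j ∈ J^+} v_j² λ_i σ'_{i,j} ≥ m·c/((c·c'+1)(d+1)), and likewise Σ_{i=1}^m Σ_{j ∈ J^−} v_j² λ_i σ'_{i,j} ≥ m·c/((c·c'+1)(d+1)). -/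
open InnerProductSpace Finset

lemma kkt_aux (d m k : ℕ)
    (x : Fin m → EuclideanSpace ℝ (Fin d)) (y : Fin m → ℝ)
    (w : Fin k → EuclideanSpace ℝ (Fin d)) (b v : Fin k → ℝ)
    (lam : Fin m → ℝ) (s : Fin m → Fin k → ℝ) (p : ℝ) (σ : ℝ)
    (hy : ∀ i, y i = 1 ∨ y i = -1)
    (hx : ∀ i, ‖x i‖ = Real.sqrt d)
    (hp0 : 0 ≤ p)
    (hp : ∀ i j, i ≠ j → |⟪x i, x j⟫_ℝ| ≤ p)
    (hlam : ∀ i, 0 ≤ lam i)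
    (hs01 : ∀ i j, s i j ∈ Set.Icc (0 : ℝ) 1)
    (hw : ∀ j, w j = ∑ i, (lam i * y i * v j * s i j) • x i)
    (hb : ∀ j, b j = ∑ i, lam i * y i * v j * s i j)
    (J : Finset (Fin k))
    (hmar : ∀ i, y i = σ → 1 ≤ ∑ j ∈ J, σ * v j * s i j * (⟪w j, x i⟫_ℝ + b j))
    (c : ℝ) (hc0 : 0 < c)
    (hI : c * m ≤ ((Finset.univ.filter fun i => y i = σ).card : ℝ)) :
    (m : ℝ) * c / ((c * ((m : ℝ) * (p + 1) / ((d : ℝ) + 1)) + 1) * ((d : ℝ) + 1)) ≤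
      ∑ i, ∑ j ∈ J, (v j) ^ 2 * lam i * s i j := by
  set S : ℝ := ∑ i, ∑ j ∈ J, (v j) ^ 2 * lam i * s i j with hSdef
  have hterm0 : ∀ (i : Fin m) (j : Fin k), 0 ≤ (v j) ^ 2 * lam i * s i j := by
    intro i j
    exact mul_nonneg (mul_nonneg (sq_nonneg _) (hlam i)) (hs01 i j).1
  have hS0 : 0 ≤ S := by
    apply Finset.sum_nonneg; intro i _
    exact Finset.sum_nonneg fun j _ => hterm0 i j
  have hxx : ∀ i : Fin m, ⟪x i, x i⟫_ℝ = (d : ℝ) := by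
    intro i
    rw [real_inner_self_eq_norm_sq, hx i, Real.sq_sqrt (Nat.cast_nonneg d)]
  -- Step 1
  have step1 : ∀ i : Fin m, y i = σ →
      1 ≤ ((d : ℝ) + 1) * (∑ j ∈ J, (v j) ^ 2 * lam i * s i j) + (p + 1) * S := by
    intro i hi
    have hexp : ∀ j, ⟪w j, x i⟫_ℝ + b j
        = ∑ l, lam l * y l * v j * s l j * (⟪x l, x i⟫_ℝ + 1) := by
      intro j
      rw [hw j, hb j, sum_inner, ← Finset.sum_add_distrib]
      refine Finset.sum_congr rfl fun l _ => ?_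
      rw [real_inner_smul_left]; ring
    have key := hmar i hi
    have hrw : ∀ j ∈ J, σ * v j * s i j * (⟪w j, x i⟫_ℝ + b j)
        = ∑ l, σ * y l * (lam l * (v j) ^ 2 * s i j * s l j * (⟪x l, x i⟫_ℝ + 1)) := by
      intro j _
      rw [hexp j, Finset.mul_sum]
      refine Finset.sum_congr rfl fun l _ => ?_
      ring
    rw [Finset.sum_congr rfl hrw] at key
    have hbound : ∀ j ∈ J, (∑ l, σ * y l * (lam l * (v j) ^ 2 * s i j * s l j * (⟪x l, x i⟫_ℝ + 1)))
        ≤ (∑ l, ((if l = i then ((d : ℝ) + 1) * ((v j) ^ 2 * lam i * s i j) else 0)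
            + (p + 1) * ((v j) ^ 2 * lam l * s l j))) := by
      intro j _
      refine Finset.sum_le_sum fun l _ => ?_
      have hs1l := (hs01 l j).1
      have hs2l := (hs01 l j).2
      have hs1i := (hs01 i j).1
      have hs2i := (hs01 i j).2
      have hσl : σ * y l = 1 ∨ σ * y l = -1 := by
        rcases hy i with h1 | h1 <;> rcases hy l with h2 | h2 <;>
          simp [← hi, h1, h2]
      have habs : σ * y l * (lam l * (v j) ^ 2 * s i j * s l j * (⟪x l, x i⟫_ℝ + 1))
          ≤ lam l * (v j) ^ 2 * s i j * s l j * |⟪x l, x i⟫_ℝ + 1| := by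
        have hnn : 0 ≤ lam l * (v j) ^ 2 * s i j * s l j :=
          mul_nonneg (mul_nonneg (mul_nonneg (hlam l) (sq_nonneg _)) hs1i) hs1l
        rcases hσl with h | h <;> rw [h]
        · rw [one_mul]
          exact mul_le_mul_of_nonneg_left (le_abs_self _) hnn
        · rw [neg_one_mul]
          have := neg_abs_le (⟪x l, x i⟫_ℝ + 1)
          nlinarith [abs_nonneg (⟪x l, x i⟫_ℝ + 1)]
      by_cases hl : l = i
      · subst hl
        rw [if_pos rfl]
        have habs2 : |⟪x l, x l⟫_ℝ + 1| = (d : ℝ) + 1 := by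
          rw [hxx l, abs_of_nonneg (by positivity)]
        rw [habs2] at habs
        have e1 : 0 ≤ ((d : ℝ) + 1) * (lam l * (v j) ^ 2 * s l j) * (1 - s l j) :=
          mul_nonneg (mul_nonneg (by positivity)
            (mul_nonneg (mul_nonneg (hlam l) (sq_nonneg _)) hs1l)) (by linarith)
        have e2 : 0 ≤ (p + 1) * ((v j) ^ 2 * lam l * s l j) :=
          mul_nonneg (by linarith) (mul_nonneg (mul_nonneg (sq_nonneg _) (hlam l)) hs1l)
        nlinarith [habs, e1, e2]
      · rw [if_neg hl]
        have habs2 : |⟪x l, x i⟫_ℝ + 1| ≤ p + 1 := by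
          have := hp l i hl
          have h1 := abs_add_le (⟪x l, x i⟫_ℝ) 1
          simp only [abs_one] at h1
          linarith
        have hnn : 0 ≤ lam l * (v j) ^ 2 * s i j * s l j :=
          mul_nonneg (mul_nonneg (mul_nonneg (hlam l) (sq_nonneg _)) hs1i) hs1l
        have h2 : lam l * (v j) ^ 2 * s i j * s l j * |⟪x l, x i⟫_ℝ + 1|
            ≤ lam l * (v j) ^ 2 * s i j * s l j * (p + 1) :=
          mul_le_mul_of_nonneg_left habs2 hnn
        have h3 : lam l * (v j) ^ 2 * s i j * s l j * (p + 1)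
            ≤ (p + 1) * ((v j) ^ 2 * lam l * s l j) := by
          have e1 : 0 ≤ (p + 1) * (lam l * (v j) ^ 2 * s l j) * (1 - s i j) :=
            mul_nonneg (mul_nonneg (by linarith)
              (mul_nonneg (mul_nonneg (hlam l) (sq_nonneg _)) hs1l)) (by linarith)
          nlinarith [e1]
        simpa using habs.trans (h2.trans h3)
    have key2 : (1 : ℝ) ≤ ∑ j ∈ J, (∑ l, ((if l = i then ((d : ℝ) + 1) * ((v j) ^ 2 * lam i * s i j) else 0)
            + (p + 1) * ((v j) ^ 2 * lam l * s l j))) :=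
      key.trans (Finset.sum_le_sum hbound)
    have heval : ∀ j ∈ J, (∑ l, ((if l = i then ((d : ℝ) + 1) * ((v j) ^ 2 * lam i * s i j) else 0)
            + (p + 1) * ((v j) ^ 2 * lam l * s l j)))
        = ((d : ℝ) + 1) * ((v j) ^ 2 * lam i * s i j)
          + ∑ l, (p + 1) * ((v j) ^ 2 * lam l * s l j) := by
      intro j _
      rw [Finset.sum_add_distrib, Finset.sum_ite_eq' Finset.univ i
        (fun _ => ((d : ℝ) + 1) * ((v j) ^ 2 * lam i * s i j)), if_pos (Finset.mem_univ i)]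
    rw [Finset.sum_congr rfl heval, Finset.sum_add_distrib, ← Finset.mul_sum] at key2
    have hswap : ∑ j ∈ J, ∑ l, (p + 1) * ((v j) ^ 2 * lam l * s l j) = (p + 1) * S := by
      rw [hSdef, Finset.mul_sum, Finset.sum_comm]
      refine Finset.sum_congr rfl fun j _ => ?_
      rw [Finset.mul_sum]
    rw [hswap] at key2
    exact key2
  -- Step 2: sum over I_sigma
  set Iσ := Finset.univ.filter fun i => y i = σ with hIσ
  set n : ℝ := (Iσ.card : ℝ) with hn
  have hAle : ∑ i ∈ Iσ, ∑ j ∈ J, (v j) ^ 2 * lam i * s i j ≤ S := by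
    apply Finset.sum_le_sum_of_subset_of_nonneg (Finset.filter_subset _ _)
    intro i _ _
    exact Finset.sum_nonneg fun j _ => hterm0 i j
  have step2 : n ≤ ((d : ℝ) + 1) * S + n * ((p + 1) * S) := by
    have h1 : ∑ i ∈ Iσ, (1 : ℝ) ≤ ∑ i ∈ Iσ,
        (((d : ℝ) + 1) * (∑ j ∈ J, (v j) ^ 2 * lam i * s i j) + (p + 1) * S) := by
      refine Finset.sum_le_sum fun i hi => ?_
      exact step1 i (Finset.mem_filter.mp hi).2
    rw [Finset.sum_const, nsmul_eq_mul, mul_one, Finset.sum_add_distrib,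
      Finset.sum_const, nsmul_eq_mul, ← Finset.mul_sum] at h1
    have h2 : ((d : ℝ) + 1) * (∑ i ∈ Iσ, ∑ j ∈ J, (v j) ^ 2 * lam i * s i j)
        ≤ ((d : ℝ) + 1) * S := by
      apply mul_le_mul_of_nonneg_left hAle (by positivity)
    calc n ≤ _ := h1
    _ ≤ _ := by rw [hn]; linarith
  -- Step 3: algebra
  have hD : (0 : ℝ) < (d : ℝ) + 1 := by positivity
  have hdenom : (c * ((m : ℝ) * (p + 1) / ((d : ℝ) + 1)) + 1) * ((d : ℝ) + 1)
      = c * (m : ℝ) * (p + 1) + ((d : ℝ) + 1) := by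
    field_simp
  rw [hdenom, div_le_iff₀ (by positivity)]
  have hn0 : 0 ≤ n := by positivity
  have hcm0 : 0 ≤ c * (m : ℝ) := by positivity
  rcases le_or_gt 1 (S * (p + 1)) with hcase | hcase
  · nlinarith [mul_le_mul_of_nonneg_left hcase hcm0, mul_nonneg hS0 hD.le]
  · have h1 : 0 ≤ 1 - S * (p + 1) := by linarith
    have h2 : c * (m : ℝ) * (1 - S * (p + 1)) ≤ n * (1 - S * (p + 1)) :=
      mul_le_mul_of_nonneg_right hI h1
    nlinarith [step2]

/-- under the KKT conditions, if both labels make up at least a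
`c`-fraction of the data, then (with `c' := m(p+1)/(d+1)`) the sums
`∑ᵢ ∑_{j∈J⁺} vⱼ² λᵢ σ'ᵢⱼ` and `∑ᵢ ∑_{j∈J⁻} vⱼ² λᵢ σ'ᵢⱼ` are both at least
`mc/((cc'+1)(d+1))`. -/
theorem kkt_large_lambda_sum (d m k : ℕ)
    (x : Fin m → EuclideanSpace ℝ (Fin d)) (y : Fin m → ℝ)
    (w : Fin k → EuclideanSpace ℝ (Fin d)) (b v : Fin k → ℝ)
    (lam : Fin m → ℝ) (s : Fin m → Fin k → ℝ) (p : ℝ)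
    (hy : ∀ i, y i = 1 ∨ y i = -1)
    (hx : ∀ i, ‖x i‖ = Real.sqrt d)
    (hp0 : 0 ≤ p)
    (hp : ∀ i j, i ≠ j → |⟪x i, x j⟫_ℝ| ≤ p)
    (hlam : ∀ i, 0 ≤ lam i)
    (hs01 : ∀ i j, s i j ∈ Set.Icc (0 : ℝ) 1)
    (hmargin : ∀ i, 1 ≤ y i * net w b v (x i))
    (hcomp : ∀ i, y i * net w b v (x i) ≠ 1 → lam i = 0)
    (hs1 : ∀ i j, 0 < ⟪w j, x i⟫_ℝ + b j → s i j = 1)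
    (hs0 : ∀ i j, ⟪w j, x i⟫_ℝ + b j < 0 → s i j = 0)
    (hw : ∀ j, w j = ∑ i, (lam i * y i * v j * s i j) • x i)
    (hb : ∀ j, b j = ∑ i, lam i * y i * v j * s i j)
    (c : ℝ) (hc0 : 0 < c) (hc1 : c ≤ 1)
    (hIp : c * m ≤ ((Finset.univ.filter fun i => y i = 1).card : ℝ))
    (hIm : c * m ≤ ((Finset.univ.filter fun i => y i = -1).card : ℝ)) :
    (m : ℝ) * c / ((c * ((m : ℝ) * (p + 1) / ((d : ℝ) + 1)) + 1) * ((d : ℝ) + 1)) ≤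
      ∑ i, ∑ j ∈ Finset.univ.filter fun j => 0 ≤ v j, (v j) ^ 2 * lam i * s i j ∧
    (m : ℝ) * c / ((c * ((m : ℝ) * (p + 1) / ((d : ℝ) + 1)) + 1) * ((d : ℝ) + 1)) ≤
      ∑ i, ∑ j ∈ Finset.univ.filter fun j => v j < 0, (v j) ^ 2 * lam i * s i j := by
  have hrelu : ∀ i j, max 0 (⟪w j, x i⟫_ℝ + b j) = s i j * (⟪w j, x i⟫_ℝ + b j) := by
    intro i j
    rcases lt_trichotomy (⟪w j, x i⟫_ℝ + b j) 0 with h | h | h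
    · rw [hs0 i j h, max_eq_left h.le, zero_mul]
    · rw [h, mul_zero, max_self]
    · rw [hs1 i j h, max_eq_right h.le, one_mul]
  have hsplit : ∀ i : Fin m, net w b v (x i)
      = (∑ j ∈ Finset.univ.filter fun j => 0 ≤ v j, v j * (s i j * (⟪w j, x i⟫_ℝ + b j)))
      + (∑ j ∈ Finset.univ.filter fun j => v j < 0, v j * (s i j * (⟪w j, x i⟫_ℝ + b j))) := by
    intro i
    unfold net
    simp_rw [hrelu i]
    rw [← Finset.sum_filter_add_sum_filter_not Finset.univ (fun j => 0 ≤ v j)]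
    congr 1
    apply Finset.sum_congr _ fun _ _ => rfl
    ext j
    simp [not_le]
  have hJm0 : ∀ i : Fin m,
      ∑ j ∈ Finset.univ.filter fun j => v j < 0, v j * (s i j * (⟪w j, x i⟫_ℝ + b j)) ≤ 0 := by
    intro i
    apply Finset.sum_nonpos
    intro j hj
    have hvj : v j < 0 := (Finset.mem_filter.mp hj).2
    have : 0 ≤ s i j * (⟪w j, x i⟫_ℝ + b j) := by rw [← hrelu i j]; exact le_max_left _ _
    exact mul_nonpos_of_nonpos_of_nonneg hvj.le this
  have hJp0 : ∀ i : Fin m,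
      0 ≤ ∑ j ∈ Finset.univ.filter fun j => 0 ≤ v j, v j * (s i j * (⟪w j, x i⟫_ℝ + b j)) := by
    intro i
    apply Finset.sum_nonneg
    intro j hj
    have hvj : 0 ≤ v j := (Finset.mem_filter.mp hj).2
    have : 0 ≤ s i j * (⟪w j, x i⟫_ℝ + b j) := by rw [← hrelu i j]; exact le_max_left _ _
    exact mul_nonneg hvj this
  constructor
  · refine kkt_aux d m k x y w b v lam s p 1 hy hx hp0 hp hlam hs01 hw hb _ ?_ c hc0 hIp
    intro i hi
    have h1 := hmargin i
    rw [hi, one_mul, hsplit i] at h1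
    have h2 := hJm0 i
    have h3 : (1 : ℝ) ≤ ∑ j ∈ Finset.univ.filter fun j => 0 ≤ v j,
        v j * (s i j * (⟪w j, x i⟫_ℝ + b j)) := by linarith
    exact h3.trans_eq (Finset.sum_congr rfl fun j _ => by ring)
  · refine kkt_aux d m k x y w b v lam s p (-1) hy hx hp0 hp hlam hs01 hw hb _ ?_ c hc0 hIm
    intro i hi
    have h1 := hmargin i
    rw [hi, neg_one_mul, hsplit i] at h1
    have h2 := hJp0 i
    have h3 : (1 : ℝ) ≤ -∑ j ∈ Finset.univ.filter fun j => v j < 0,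
        v j * (s i j * (⟪w j, x i⟫_ℝ + b j)) := by linarith
    rw [← Finset.sum_neg_distrib] at h3
    exact h3.trans_eq (Finset.sum_congr rfl fun j _ => by ring)
end

section
/- Assume the KKT setup with dataset size m, and let u := Σ_{l=1}^m y_l x_l. Then for every j ∈ J^+ we have ⟨w_j, u⟩ ≥ (d − m·p) · Σ_{i=1}^m v_j λ_i σ'_{i,j}, and for every j ∈ J^− we have ⟨w_j, u⟩ ≤ (d − m·p) · Σ_{i=1}^m v_j λ_i σ'_{i,j}. -/
open InnerProductSpace Finset

/-- under the KKT conditions, with `u := ∑ₗ yₗ xₗ`, for every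
`j ∈ J⁺` we have `⟪wⱼ, u⟫ ≥ (d - mp) ∑ᵢ vⱼ λᵢ σ'ᵢⱼ`, and for every `j ∈ J⁻` the
reverse inequality holds. -/
theorem kkt_inner_with_signed_sum (d m k : ℕ)
    (x : Fin m → EuclideanSpace ℝ (Fin d)) (y : Fin m → ℝ)
    (w : Fin k → EuclideanSpace ℝ (Fin d)) (b v : Fin k → ℝ)
    (lam : Fin m → ℝ) (s : Fin m → Fin k → ℝ) (p : ℝ)
    (hy : ∀ i, y i = 1 ∨ y i = -1)
    (hx : ∀ i, ‖x i‖ = Real.sqrt d)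
    (hp0 : 0 ≤ p)
    (hp : ∀ i j, i ≠ j → |⟪x i, x j⟫_ℝ| ≤ p)
    (hlam : ∀ i, 0 ≤ lam i)
    (hs01 : ∀ i j, s i j ∈ Set.Icc (0 : ℝ) 1)
    (hmargin : ∀ i, 1 ≤ y i * net w b v (x i))
    (hcomp : ∀ i, y i * net w b v (x i) ≠ 1 → lam i = 0)
    (hs1 : ∀ i j, 0 < ⟪w j, x i⟫_ℝ + b j → s i j = 1)
    (hs0 : ∀ i j, ⟪w j, x i⟫_ℝ + b j < 0 → s i j = 0)
    (hw : ∀ j, w j = ∑ i, (lam i * y i * v j * s i j) • x i)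
    (hb : ∀ j, b j = ∑ i, lam i * y i * v j * s i j)
    : (∀ j, 0 ≤ v j →
        ((d : ℝ) - (m : ℝ) * p) * ∑ i, v j * lam i * s i j ≤ ⟪w j, ∑ l, y l • x l⟫_ℝ) ∧
      (∀ j, v j < 0 →
        ⟪w j, ∑ l, y l • x l⟫_ℝ ≤ ((d : ℝ) - (m : ℝ) * p) * ∑ i, v j * lam i * s i j) := by
  have hy1 : ∀ i, |y i| = 1 := by intro i; rcases hy i with h | h <;> simp [h]
  have hyy : ∀ i, y i * y i = 1 := by intro i; rcases hy i with h | h <;> rw [h] <;> ring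
  have key : ∀ j, |⟪w j, ∑ l, y l • x l⟫_ℝ - (d : ℝ) * ∑ i, v j * lam i * s i j| ≤
      (m : ℝ) * p * ∑ i, lam i * s i j * |v j| := by
    intro j
    have hxx : ∀ i, ⟪x i, x i⟫_ℝ = (d : ℝ) := by
      intro i
      rw [real_inner_self_eq_norm_sq, hx i, Real.sq_sqrt (Nat.cast_nonneg d)]
    have hinner : ⟪w j, ∑ l, y l • x l⟫_ℝ =
        ∑ i, (lam i * y i * v j * s i j) * ∑ l, y l * ⟪x i, x l⟫_ℝ := by
      rw [hw j, sum_inner]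
      refine Finset.sum_congr rfl fun i _ => ?_
      rw [real_inner_smul_left, inner_sum]
      congr 1
      exact Finset.sum_congr rfl fun l _ => real_inner_smul_right _ _ _
    have hdiff : ⟪w j, ∑ l, y l • x l⟫_ℝ - (d : ℝ) * ∑ i, v j * lam i * s i j =
        ∑ i, (lam i * y i * v j * s i j) * ∑ l ∈ univ.erase i, y l * ⟪x i, x l⟫_ℝ := by
      rw [hinner, Finset.mul_sum, ← Finset.sum_sub_distrib]
      refine Finset.sum_congr rfl fun i _ => ?_
      rw [← Finset.add_sum_erase _ _ (mem_univ i), hxx i]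
      linear_combination (lam i * v j * s i j * (d : ℝ)) * hyy i
    rw [hdiff]
    calc |∑ i, (lam i * y i * v j * s i j) * ∑ l ∈ univ.erase i, y l * ⟪x i, x l⟫_ℝ|
        ≤ ∑ i, |(lam i * y i * v j * s i j) * ∑ l ∈ univ.erase i, y l * ⟪x i, x l⟫_ℝ| :=
          Finset.abs_sum_le_sum_abs _ _
      _ ≤ ∑ i, (lam i * s i j * |v j|) * ((m : ℝ) * p) := by
          refine Finset.sum_le_sum fun i _ => ?_
          rw [abs_mul]
          have h1 : |lam i * y i * v j * s i j| = lam i * s i j * |v j| := by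
            rw [abs_mul, abs_mul, abs_mul, hy1 i, abs_of_nonneg (hlam i),
              abs_of_nonneg (hs01 i j).1]
            ring
          rw [h1]
          refine mul_le_mul_of_nonneg_left ?_ (mul_nonneg (mul_nonneg (hlam i) (hs01 i j).1) (abs_nonneg _))
          calc |∑ l ∈ univ.erase i, y l * ⟪x i, x l⟫_ℝ|
              ≤ ∑ l ∈ univ.erase i, |y l * ⟪x i, x l⟫_ℝ| := Finset.abs_sum_le_sum_abs _ _
            _ ≤ ∑ l ∈ univ.erase i, p := by
                refine Finset.sum_le_sum fun l hl => ?_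
                rw [abs_mul, hy1 l, one_mul]
                exact hp i l (Ne.symm (Finset.mem_erase.mp hl).1)
            _ = ((univ.erase i).card : ℝ) * p := by rw [Finset.sum_const, nsmul_eq_mul]
            _ ≤ (m : ℝ) * p := by
                refine mul_le_mul_of_nonneg_right ?_ hp0
                exact_mod_cast Finset.card_le_card (Finset.erase_subset _ _) |>.trans
                  (le_of_eq (Finset.card_univ (α := Fin m) ▸ Fintype.card_fin m))
      _ = (m : ℝ) * p * ∑ i, lam i * s i j * |v j| := by
          rw [Finset.mul_sum]; exact Finset.sum_congr rfl fun i _ => by ring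
  have hTnn : ∀ j, 0 ≤ ∑ i, lam i * s i j := fun j =>
    Finset.sum_nonneg fun i _ => mul_nonneg (hlam i) (hs01 i j).1
  constructor
  · intro j hvj
    have hk := key j
    rw [abs_le] at hk
    have habs : |v j| = v j := abs_of_nonneg hvj
    have e1 : (∑ i, lam i * s i j * |v j|) = ∑ i, v j * lam i * s i j := by
      rw [habs]; exact Finset.sum_congr rfl fun i _ => by ring
    rw [e1] at hk
    nlinarith [hk.1, hk.2]
  · intro j hvj
    have hk := key j
    rw [abs_le] at hk
    have habs : |v j| = -v j := abs_of_neg hvj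
    have e1 : (∑ i, lam i * s i j * |v j|) = -∑ i, v j * lam i * s i j := by
      rw [habs, ← Finset.sum_neg_distrib]; exact Finset.sum_congr rfl fun i _ => by ring
    rw [e1] at hk
    nlinarith [hk.1, hk.2]
end

section
/- Assume the KKT setup with dataset size m and that m·(p+1) ≤ (d+1)/3 (so that d − m·p > 0). Let η ≥ (p+1)/(d − m·p) and let z := η · Σ_{l=1}^m y_l x_l. Then for every i ∈ [m]: ⟨w_j, x_i − z⟩ + b_j ≥ 0 for all j ∈ J^−, and ⟨w_j, x_i + z⟩ + b_j ≥ 0 for all j ∈ J^+. -/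
open InnerProductSpace Finset

lemma core_lemma {d m : ℕ} {p η : ℝ} (x : Fin m → EuclideanSpace ℝ (Fin d))
    (y a : Fin m → ℝ)
    (hy : ∀ l, y l = 1 ∨ y l = -1)
    (hd : ∀ l, ⟪x l, x l⟫_ℝ = (d : ℝ))
    (hp0 : 0 ≤ p) (hp : ∀ l t, l ≠ t → |⟪x l, x t⟫_ℝ| ≤ p)
    (ha : ∀ l, 0 ≤ a l)
    (hdmp : 0 < (d : ℝ) - (m : ℝ) * p)
    (hη : (p + 1) / ((d : ℝ) - (m : ℝ) * p) ≤ η)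
    (i : Fin m)
    (hcase : 0 < ∑ l, y l * a l * (⟪x l, x i⟫_ℝ + 1) → a i = 0) :
    ∑ l, y l * a l * (⟪x l, x i⟫_ℝ + 1)
      ≤ η * ∑ l, a l * ∑ t, y l * y t * ⟪x l, x t⟫_ℝ := by
  have habs : ∀ t, |y t| = 1 := fun t => by rcases hy t with h | h <;> simp [h]
  set S := ∑ l, a l with hS
  have hS0 : 0 ≤ S := Finset.sum_nonneg fun l _ => ha l
  have hηd : p + 1 ≤ η * ((d : ℝ) - (m : ℝ) * p) := by
    rw [div_le_iff₀ hdmp] at hη; linarith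
  have hη0 : 0 ≤ η := by nlinarith
  have hm1 : (1 : ℝ) ≤ (m : ℝ) := by exact_mod_cast i.pos
  have key : ∀ l, (d : ℝ) - (m : ℝ) * p ≤ ∑ t, y l * y t * ⟪x l, x t⟫_ℝ := by
    intro l
    rw [← Finset.sum_sdiff (Finset.subset_univ {l}), Finset.sum_singleton]
    have hll : y l * y l * ⟪x l, x l⟫_ℝ = (d : ℝ) := by
      rcases hy l with h | h <;> rw [h, hd l] <;> ring
    have hbound : ∀ t ∈ univ \ {l}, -p ≤ y l * y t * ⟪x l, x t⟫_ℝ := by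
      intro t ht
      simp only [Finset.mem_sdiff, Finset.mem_singleton] at ht
      have h1 : |y l * y t * ⟪x l, x t⟫_ℝ| ≤ p := by
        rw [abs_mul, abs_mul, habs l, habs t, one_mul, one_mul]
        exact hp l t fun h => ht.2 h.symm
      linarith [neg_abs_le (y l * y t * ⟪x l, x t⟫_ℝ)]
    have hcard : ((univ \ {l} : Finset (Fin m)).card : ℝ) = (m : ℝ) - 1 := by
      rw [Finset.card_sdiff_of_subset (Finset.subset_univ _), Finset.card_singleton,
        Finset.card_univ, Fintype.card_fin]
      have : 1 ≤ m := i.pos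
      push_cast [Nat.cast_sub this]
      ring
    have hsum := Finset.card_nsmul_le_sum (univ \ {l}) _ (-p) hbound
    rw [nsmul_eq_mul, hcard] at hsum
    rw [hll]
    nlinarith
  have hZ : ((d : ℝ) - (m : ℝ) * p) * S ≤ ∑ l, a l * ∑ t, y l * y t * ⟪x l, x t⟫_ℝ := by
    rw [hS, Finset.mul_sum]
    refine Finset.sum_le_sum fun l _ => ?_
    calc ((d : ℝ) - (m : ℝ) * p) * a l = a l * ((d : ℝ) - (m : ℝ) * p) := by ring
      _ ≤ a l * ∑ t, y l * y t * ⟪x l, x t⟫_ℝ := mul_le_mul_of_nonneg_left (key l) (ha l)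
  have hF : ∑ l, y l * a l * (⟪x l, x i⟫_ℝ + 1) ≤ (p + 1) * S := by
    by_cases hpos : 0 < ∑ l, y l * a l * (⟪x l, x i⟫_ℝ + 1)
    · have hai := hcase hpos
      rw [hS, Finset.mul_sum]
      refine Finset.sum_le_sum fun l _ => ?_
      by_cases hl : l = i
      · subst hl; rw [hai]; ring_nf; positivity
      · have h2 : y l * (⟪x l, x i⟫_ℝ + 1) ≤ p + 1 := by
          calc y l * (⟪x l, x i⟫_ℝ + 1) ≤ |y l * (⟪x l, x i⟫_ℝ + 1)| := le_abs_self _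
            _ = |⟪x l, x i⟫_ℝ + 1| := by rw [abs_mul, habs l, one_mul]
            _ ≤ |⟪x l, x i⟫_ℝ| + 1 := by
                calc |⟪x l, x i⟫_ℝ + 1| ≤ |⟪x l, x i⟫_ℝ| + |(1:ℝ)| := abs_add_le _ _
                  _ = |⟪x l, x i⟫_ℝ| + 1 := by norm_num
            _ ≤ p + 1 := by linarith [hp l i hl]
        calc y l * a l * (⟪x l, x i⟫_ℝ + 1) = a l * (y l * (⟪x l, x i⟫_ℝ + 1)) := by ring
          _ ≤ a l * (p + 1) := mul_le_mul_of_nonneg_left h2 (ha l)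
          _ = (p + 1) * a l := by ring
    · push_neg at hpos
      nlinarith
  calc ∑ l, y l * a l * (⟪x l, x i⟫_ℝ + 1) ≤ (p + 1) * S := hF
    _ ≤ (η * ((d : ℝ) - (m : ℝ) * p)) * S := mul_le_mul_of_nonneg_right hηd hS0
    _ = η * (((d : ℝ) - (m : ℝ) * p) * S) := by ring
    _ ≤ η * ∑ l, a l * ∑ t, y l * y t * ⟪x l, x t⟫_ℝ := mul_le_mul_of_nonneg_left hZ hη0

/-- under the KKT conditions, if `m(p+1) ≤ (d+1)/3` and
`η ≥ (p+1)/(d-mp)`, then with `z := η ∑ₗ yₗ xₗ` every neuron of `J⁻` is active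
at `xᵢ - z` and every neuron of `J⁺` is active at `xᵢ + z`. -/
theorem kkt_neurons_become_active (d m k : ℕ)
    (x : Fin m → EuclideanSpace ℝ (Fin d)) (y : Fin m → ℝ)
    (w : Fin k → EuclideanSpace ℝ (Fin d)) (b v : Fin k → ℝ)
    (lam : Fin m → ℝ) (s : Fin m → Fin k → ℝ) (p : ℝ)
    (hy : ∀ i, y i = 1 ∨ y i = -1)
    (hx : ∀ i, ‖x i‖ = Real.sqrt d)
    (hp0 : 0 ≤ p)
    (hp : ∀ i j, i ≠ j → |⟪x i, x j⟫_ℝ| ≤ p)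
    (hlam : ∀ i, 0 ≤ lam i)
    (hs01 : ∀ i j, s i j ∈ Set.Icc (0 : ℝ) 1)
    (hmargin : ∀ i, 1 ≤ y i * net w b v (x i))
    (hcomp : ∀ i, y i * net w b v (x i) ≠ 1 → lam i = 0)
    (hs1 : ∀ i j, 0 < ⟪w j, x i⟫_ℝ + b j → s i j = 1)
    (hs0 : ∀ i j, ⟪w j, x i⟫_ℝ + b j < 0 → s i j = 0)
    (hw : ∀ j, w j = ∑ i, (lam i * y i * v j * s i j) • x i)
    (hb : ∀ j, b j = ∑ i, lam i * y i * v j * s i j)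
    (hmp : (m : ℝ) * (p + 1) ≤ ((d : ℝ) + 1) / 3)
    (η : ℝ) (hη : (p + 1) / ((d : ℝ) - (m : ℝ) * p) ≤ η) :
    ∀ i : Fin m,
      (∀ j, v j < 0 → 0 ≤ ⟪w j, x i - η • ∑ l, y l • x l⟫_ℝ + b j) ∧
      (∀ j, 0 ≤ v j → 0 ≤ ⟪w j, x i + η • ∑ l, y l • x l⟫_ℝ + b j) := by
  intro i
  have hm1 : (1 : ℝ) ≤ (m : ℝ) := by exact_mod_cast i.pos
  have hd0 : (0 : ℝ) ≤ (d : ℝ) := Nat.cast_nonneg d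
  have hdmp : 0 < (d : ℝ) - (m : ℝ) * p := by nlinarith
  have hd : ∀ l, ⟪x l, x l⟫_ℝ = (d : ℝ) := by
    intro l
    rw [real_inner_self_eq_norm_sq, hx l, Real.sq_sqrt hd0]
  have hwx : ∀ j t, ⟪w j, x t⟫_ℝ = ∑ l, (lam l * y l * v j * s l j) * ⟪x l, x t⟫_ℝ := by
    intro j t
    rw [hw j, sum_inner]
    simp only [real_inner_smul_left]
  have hwsum : ∀ j, ⟪w j, ∑ l, y l • x l⟫_ℝ
      = ∑ t, ∑ l, y t * ((lam l * y l * v j * s l j) * ⟪x l, x t⟫_ℝ) := by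
    intro j
    rw [inner_sum]
    refine Finset.sum_congr rfl fun t _ => ?_
    rw [real_inner_smul_right, hwx j t, Finset.mul_sum]
  constructor
  · -- negative neurons
    intro j hvj
    set a : Fin m → ℝ := fun l => lam l * (-v j) * s l j with ha_def
    have ha : ∀ l, 0 ≤ a l := fun l =>
      mul_nonneg (mul_nonneg (hlam l) (by linarith)) (hs01 l j).1
    have hFa : ∑ l, y l * a l * (⟪x l, x i⟫_ℝ + 1) = -(⟪w j, x i⟫_ℝ + b j) := by
      rw [hwx j i, hb j, ← Finset.sum_add_distrib, ← Finset.sum_neg_distrib]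
      refine Finset.sum_congr rfl fun l _ => ?_
      simp only [ha_def]; ring
    have hZa : ∑ l, a l * ∑ t, y l * y t * ⟪x l, x t⟫_ℝ = -⟪w j, ∑ l, y l • x l⟫_ℝ := by
      rw [hwsum j]
      simp only [Finset.mul_sum]
      rw [Finset.sum_comm, ← Finset.sum_neg_distrib]
      refine Finset.sum_congr rfl fun t _ => ?_
      rw [← Finset.sum_neg_distrib]
      refine Finset.sum_congr rfl fun l _ => ?_
      simp only [ha_def]; ring
    have hcase : 0 < ∑ l, y l * a l * (⟪x l, x i⟫_ℝ + 1) → a i = 0 := by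
      intro h
      rw [hFa] at h
      have hs := hs0 i j (by linarith)
      simp only [ha_def, hs, mul_zero]
    have hkey := core_lemma x y a hy hd hp0 hp ha hdmp hη i hcase
    rw [hFa, hZa] at hkey
    have hexp : ⟪w j, x i - η • ∑ l, y l • x l⟫_ℝ + b j
        = (⟪w j, x i⟫_ℝ + b j) - η * ⟪w j, ∑ l, y l • x l⟫_ℝ := by
      rw [inner_sub_right, real_inner_smul_right]; ring
    rw [hexp]; linarith
  · -- positive neurons
    intro j hvj
    set a : Fin m → ℝ := fun l => lam l * v j * s l j with ha_def
    set y' : Fin m → ℝ := fun l => -y l with hy'_def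
    have hy' : ∀ l, y' l = 1 ∨ y' l = -1 := by
      intro l; rcases hy l with h | h <;> simp [hy'_def, h]
    have hp' : ∀ l t, l ≠ t → |⟪x l, x t⟫_ℝ| ≤ p := hp
    have ha : ∀ l, 0 ≤ a l := fun l =>
      mul_nonneg (mul_nonneg (hlam l) hvj) (hs01 l j).1
    have hFa : ∑ l, y' l * a l * (⟪x l, x i⟫_ℝ + 1) = -(⟪w j, x i⟫_ℝ + b j) := by
      rw [hwx j i, hb j, ← Finset.sum_add_distrib, ← Finset.sum_neg_distrib]
      refine Finset.sum_congr rfl fun l _ => ?_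
      simp only [ha_def, hy'_def]; ring
    have hZa : ∑ l, a l * ∑ t, y' l * y' t * ⟪x l, x t⟫_ℝ = ⟪w j, ∑ l, y l • x l⟫_ℝ := by
      rw [hwsum j]
      simp only [Finset.mul_sum]
      rw [Finset.sum_comm]
      refine Finset.sum_congr rfl fun t _ => ?_
      refine Finset.sum_congr rfl fun l _ => ?_
      simp only [ha_def, hy'_def]; ring
    have hcase : 0 < ∑ l, y' l * a l * (⟪x l, x i⟫_ℝ + 1) → a i = 0 := by
      intro h
      rw [hFa] at h
      have hs := hs0 i j (by linarith)
      simp only [ha_def, hs, mul_zero]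
    have hkey := core_lemma x y' a hy' hd hp0 hp' ha hdmp hη i hcase
    rw [hFa, hZa] at hkey
    have hexp : ⟪w j, x i + η • ∑ l, y l • x l⟫_ℝ + b j
        = (⟪w j, x i⟫_ℝ + b j) + η * ⟪w j, ∑ l, y l • x l⟫_ℝ := by
      rw [inner_add_right, real_inner_smul_right]; ring
    rw [hexp]; linarith
end

section
/- Assume the KKT setup with dataset size m, that m·(p+1) ≤ (d+1)/3, that both labels occur (I^+ ≠ ∅ and I^− ≠ ∅), and that |I^+| ≥ c·m and |I^−| ≥ c·m for some c ∈ (0,1]. Set c' := m(p+1)/(d+1), η₁ := (p+1)/(d − m·p), η₂ := 2(c·c'+1)(d+1)/(m·c·(d − m·p)), and z := (η₁ + η₂) · Σ_{l=1}^m y_l x_l. Then for every i ∈ I^+ we have N_θ(x_i − z) ≤ −1. -/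
/-!
Write `g_j(x) = ⟪w_j, x⟫ + b_j`, `A_j = ∑ₗ λₗ s_{l,j}`, `Z = ∑ₗ yₗ xₗ` and `D = d - m p`.
Stationarity makes `g_j(x_n)` equal to its diagonal term `v_j λ_n y_n s_{n,j} (d + 1)` up to an
error `|v_j| (p + 1) A_j`, and makes the direction `Z` steep: `v_j ⟪w_j, Z⟫ ≥ v_j² A_j D`.
The margin of every negative example has to be paid for by the neurons with `v_j < 0`; summing
over `I⁻` gives `m c ≤ Φ (c m (p + 1) + d + 1)` for their mass `Φ = ∑_{v_j < 0} v_j² A_j`, which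
is exactly `η₂ D Φ ≥ 2`. At a positive example the `η₁` part of the step absorbs the error terms,
so no positive neuron grows and each negative one loses at least `η₂ D v_j² A_j`: the output drops
by `η₂ D Φ`. On the margin it started at `1`; off the margin `λ_i = 0`, the diagonal terms vanish
and the positive neurons are switched off altogether.
-/

open InnerProductSpace Finset

lemma net_sub_smul {d k : ℕ} (w : Fin k → EuclideanSpace ℝ (Fin d)) (b v : Fin k → ℝ)
    (z u : EuclideanSpace ℝ (Fin d)) (t : ℝ) :
    net w b v (z - t • u) = ∑ j, v j * max 0 (⟪w j, z⟫_ℝ + b j - t * ⟪w j, u⟫_ℝ) := by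
  simp only [net, inner_sub_right, real_inner_smul_right, sub_add_eq_add_sub]

lemma neg_mul_relu_le {v g u K : ℝ} (hu : 0 ≤ u) (hg : |g + v * u| ≤ |v| * K) :
    -(v * max 0 g) ≤ min v 0 ^ 2 * (u + K) := by
  rcases lt_or_ge v 0 with hv | hv
  · rw [min_eq_left hv.le, abs_of_neg hv] at *
    have hK : 0 ≤ K := nonneg_of_mul_nonneg_right ((abs_nonneg _).trans hg) (by linarith)
    have hgu : max 0 g ≤ -v * (u + K) :=
      max_le (by nlinarith) (by linarith [le_abs_self (g + v * u)])
    nlinarith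
  · rw [min_eq_right hv]
    nlinarith [le_max_left 0 g]

lemma mul_relu_sub_le_mul_relu_sub {v g W t K M : ℝ} (hK : 0 ≤ K) (hM : 0 ≤ M)
    (hW : v ^ 2 * (K + M) ≤ t * (v * W)) (hg : max 0 (-g) ≤ |v| * K) :
    v * max 0 (g - t * W) ≤ v * max 0 g - min v 0 ^ 2 * M := by
  rcases lt_trichotomy v 0 with hv | rfl | hv
  · rw [min_eq_left hv.le, abs_of_neg hv] at *
    have htW : t * W ≤ v * (K + M) := le_of_mul_le_mul_left (by nlinarith) (neg_pos.2 hv)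
    have hrelu : max 0 g - v * M ≤ max 0 (g - t * W) := by
      rcases le_or_gt 0 g with hg0 | hg0
      · rw [max_eq_right hg0]; nlinarith [le_max_right 0 (g - t * W)]
      · rw [max_eq_left hg0.le]; nlinarith [le_max_right 0 (g - t * W), le_max_right 0 (-g)]
    nlinarith
  · simp
  · rw [min_eq_right hv.le]
    have htW : 0 ≤ t * W := nonneg_of_mul_nonneg_right (by nlinarith) hv
    have hrelu : max 0 (g - t * W) ≤ max 0 g := max_le_max le_rfl (by linarith)
    nlinarith

lemma mul_relu_sub_le_neg {v g W t K M : ℝ} (hM : 0 ≤ M)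
    (hW : v ^ 2 * (K + M) ≤ t * (v * W)) (hg : |g| ≤ |v| * K) :
    v * max 0 (g - t * W) ≤ -(min v 0 ^ 2 * M) := by
  rcases lt_trichotomy v 0 with hv | rfl | hv
  · rw [min_eq_left hv.le, abs_of_neg hv] at *
    have htW : t * W ≤ v * (K + M) := le_of_mul_le_mul_left (by nlinarith) (neg_pos.2 hv)
    nlinarith [le_max_right 0 (g - t * W), neg_abs_le g]
  · simp
  · rw [min_eq_right hv.le, abs_of_pos hv] at *
    have htW : v * (K + M) ≤ t * W := le_of_mul_le_mul_left (by nlinarith) hv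
    have hrelu : max 0 (g - t * W) = 0 := max_eq_left (by nlinarith [le_abs_self g])
    simp [hrelu]

section KKT

variable {d m k : ℕ} {x : Fin m → EuclideanSpace ℝ (Fin d)} {y : Fin m → ℝ}
  {w : Fin k → EuclideanSpace ℝ (Fin d)} {b v : Fin k → ℝ} {lam : Fin m → ℝ}
  {s : Fin m → Fin k → ℝ} {p : ℝ}

def labelSum (x : Fin m → EuclideanSpace ℝ (Fin d)) (y : Fin m → ℝ) :
    EuclideanSpace ℝ (Fin d) :=
  ∑ l, y l • x l

def activationMass (lam : Fin m → ℝ) (s : Fin m → Fin k → ℝ) (j : Fin k) : ℝ :=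
  ∑ l, lam l * s l j

def negativeMass (v : Fin k → ℝ) (lam : Fin m → ℝ) (s : Fin m → Fin k → ℝ) : ℝ :=
  ∑ j, min (v j) 0 ^ 2 * activationMass lam s j

lemma activationMass_nonneg (hlam : ∀ i, 0 ≤ lam i) (hs : ∀ i j, 0 ≤ s i j) (j : Fin k) :
    0 ≤ activationMass lam s j :=
  sum_nonneg fun l _ => mul_nonneg (hlam l) (hs l j)

lemma negativeMass_nonneg (hlam : ∀ i, 0 ≤ lam i) (hs : ∀ i j, 0 ≤ s i j) :
    0 ≤ negativeMass v lam s :=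
  sum_nonneg fun j _ => mul_nonneg (sq_nonneg _) (activationMass_nonneg hlam hs j)

lemma inner_add_eq_sum_of_kkt
    (hw : ∀ j, w j = ∑ i, (lam i * y i * v j * s i j) • x i)
    (hb : ∀ j, b j = ∑ i, lam i * y i * v j * s i j) (j : Fin k) (z : EuclideanSpace ℝ (Fin d)) :
    ⟪w j, z⟫_ℝ + b j = ∑ l, lam l * y l * v j * s l j * (⟪x l, z⟫_ℝ + 1) := by
  simp only [hw j, hb j, sum_inner, real_inner_smul_left, ← sum_add_distrib, mul_add, mul_one]

lemma abs_inner_add_sub_le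
    (hy : ∀ i, y i = 1 ∨ y i = -1) (hx : ∀ i, ‖x i‖ = Real.sqrt d)
    (hp0 : 0 ≤ p) (hp : ∀ i j, i ≠ j → |⟪x i, x j⟫_ℝ| ≤ p) (hlam : ∀ i, 0 ≤ lam i)
    (hs : ∀ i j, 0 ≤ s i j) (hw : ∀ j, w j = ∑ i, (lam i * y i * v j * s i j) • x i)
    (hb : ∀ j, b j = ∑ i, lam i * y i * v j * s i j) (n : Fin m) (j : Fin k) :
    |⟪w j, x n⟫_ℝ + b j - v j * (lam n * y n * s n j * (d + 1))| ≤
      |v j| * ((p + 1) * activationMass lam s j) := by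
  have hxx : ⟪x n, x n⟫_ℝ = d := by
    rw [real_inner_self_eq_norm_sq, hx n, Real.sq_sqrt (Nat.cast_nonneg d)]
  have hoff : ⟪w j, x n⟫_ℝ + b j - v j * (lam n * y n * s n j * (d + 1)) =
      ∑ l ∈ univ.erase n, lam l * y l * v j * s l j * (⟪x l, x n⟫_ℝ + 1) := by
    rw [inner_add_eq_sum_of_kkt hw hb, ← sum_erase_add _ _ (mem_univ n), hxx]
    ring
  have hterm : ∀ l ∈ univ.erase n, |lam l * y l * v j * s l j * (⟪x l, x n⟫_ℝ + 1)| ≤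
      |v j| * ((p + 1) * (lam l * s l j)) := by
    intro l hl
    have hy1 : |y l| = 1 := by rcases hy l with h | h <;> simp [h]
    have hinner : |⟪x l, x n⟫_ℝ + 1| ≤ p + 1 :=
      (abs_add_le _ _).trans (by rw [abs_one]; linarith [hp l n (ne_of_mem_erase hl)])
    rw [abs_mul, abs_mul, abs_mul, abs_mul, hy1, abs_of_nonneg (hlam l),
      abs_of_nonneg (hs l j)]
    have := mul_le_mul_of_nonneg_left hinner
      (mul_nonneg (abs_nonneg (v j)) (mul_nonneg (hlam l) (hs l j)))
    linarith
  calc |⟪w j, x n⟫_ℝ + b j - v j * (lam n * y n * s n j * (d + 1))|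
      ≤ ∑ l ∈ univ.erase n, |v j| * ((p + 1) * (lam l * s l j)) :=
        hoff ▸ (abs_sum_le_sum_abs _ _).trans (sum_le_sum hterm)
    _ ≤ ∑ l, |v j| * ((p + 1) * (lam l * s l j)) :=
        sum_le_sum_of_subset_of_nonneg (erase_subset _ _) fun l _ _ =>
          mul_nonneg (abs_nonneg _) (mul_nonneg (by linarith) (mul_nonneg (hlam l) (hs l j)))
    _ = |v j| * ((p + 1) * activationMass lam s j) := by
        rw [activationMass, mul_sum, mul_sum]

lemma sub_mul_le_mul_inner_labelSum
    (hy : ∀ i, y i = 1 ∨ y i = -1) (hx : ∀ i, ‖x i‖ = Real.sqrt d)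
    (hp0 : 0 ≤ p) (hp : ∀ i j, i ≠ j → |⟪x i, x j⟫_ℝ| ≤ p) (r : Fin m) :
    (d : ℝ) - m * p ≤ y r * ⟪x r, labelSum x y⟫_ℝ := by
  have hdiag : y r * y r * ⟪x r, x r⟫_ℝ = d := by
    rw [real_inner_self_eq_norm_sq, hx r, Real.sq_sqrt (Nat.cast_nonneg d)]
    rcases hy r with h | h <;> simp [h]
  have hshift : ∀ l, 0 ≤ y r * y l * ⟪x r, x l⟫_ℝ + p := by
    intro l
    by_cases hl : r = l
    · subst hl; rw [hdiag]; positivity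
    · rcases hy r with h | h <;> rcases hy l with h' | h' <;> simp only [h, h'] <;>
        linarith [abs_le.1 (hp r l hl)]
  have := single_le_sum (fun l _ => hshift l) (mem_univ r)
  rw [hdiag, sum_add_distrib, sum_const, card_univ, Fintype.card_fin, nsmul_eq_mul] at this
  have hsum : y r * ⟪x r, labelSum x y⟫_ℝ = ∑ l, y r * y l * ⟪x r, x l⟫_ℝ := by
    simp only [labelSum, inner_sum, real_inner_smul_right, mul_sum, mul_assoc]
  linarith

lemma sq_mul_activationMass_mul_le
    (hy : ∀ i, y i = 1 ∨ y i = -1) (hx : ∀ i, ‖x i‖ = Real.sqrt d)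
    (hp0 : 0 ≤ p) (hp : ∀ i j, i ≠ j → |⟪x i, x j⟫_ℝ| ≤ p) (hlam : ∀ i, 0 ≤ lam i)
    (hs : ∀ i j, 0 ≤ s i j) (hw : ∀ j, w j = ∑ i, (lam i * y i * v j * s i j) • x i)
    (j : Fin k) :
    v j ^ 2 * activationMass lam s j * ((d : ℝ) - m * p) ≤ v j * ⟪w j, labelSum x y⟫_ℝ := by
  have hexp : v j * ⟪w j, labelSum x y⟫_ℝ =
      ∑ r, v j ^ 2 * (lam r * s r j) * (y r * ⟪x r, labelSum x y⟫_ℝ) := by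
    rw [hw j, sum_inner, mul_sum]
    exact sum_congr rfl fun r _ => by rw [real_inner_smul_left]; ring
  rw [hexp, activationMass, mul_sum, sum_mul]
  exact sum_le_sum fun r _ => mul_le_mul_of_nonneg_left
    (sub_mul_le_mul_inner_labelSum hy hx hp0 hp r)
    (mul_nonneg (sq_nonneg _) (mul_nonneg (hlam r) (hs r j)))

lemma one_le_of_label_eq_neg_one
    (hy : ∀ i, y i = 1 ∨ y i = -1) (hx : ∀ i, ‖x i‖ = Real.sqrt d)
    (hp0 : 0 ≤ p) (hp : ∀ i j, i ≠ j → |⟪x i, x j⟫_ℝ| ≤ p) (hlam : ∀ i, 0 ≤ lam i)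
    (hs : ∀ i j, 0 ≤ s i j) (hmargin : ∀ i, 1 ≤ y i * net w b v (x i))
    (hw : ∀ j, w j = ∑ i, (lam i * y i * v j * s i j) • x i)
    (hb : ∀ j, b j = ∑ i, lam i * y i * v j * s i j) (n : Fin m) (hn : y n = -1) :
    1 ≤ (d + 1) * (lam n * ∑ j, min (v j) 0 ^ 2 * s n j) + (p + 1) * negativeMass v lam s := by
  have hneuron : ∀ j, -(v j * max 0 (⟪w j, x n⟫_ℝ + b j)) ≤
      min (v j) 0 ^ 2 * (lam n * s n j * (d + 1) + (p + 1) * activationMass lam s j) := by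
    intro j
    refine neg_mul_relu_le (by have := hlam n; have := hs n j; positivity) ?_
    convert abs_inner_add_sub_le hy hx hp0 hp hlam hs hw hb n j using 2
    rw [hn]; ring
  have hnet := hmargin n
  rw [hn, neg_one_mul] at hnet
  calc 1 ≤ -net w b v (x n) := hnet
    _ = ∑ j, -(v j * max 0 (⟪w j, x n⟫_ℝ + b j)) := by rw [net, ← sum_neg_distrib]
    _ ≤ _ := sum_le_sum fun j _ => hneuron j
    _ = _ := by
        rw [negativeMass, mul_sum, mul_sum, mul_sum, ← sum_add_distrib]
        exact sum_congr rfl fun j _ => by ring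

lemma card_label_neg_one_le
    (hy : ∀ i, y i = 1 ∨ y i = -1) (hx : ∀ i, ‖x i‖ = Real.sqrt d)
    (hp0 : 0 ≤ p) (hp : ∀ i j, i ≠ j → |⟪x i, x j⟫_ℝ| ≤ p) (hlam : ∀ i, 0 ≤ lam i)
    (hs : ∀ i j, 0 ≤ s i j) (hmargin : ∀ i, 1 ≤ y i * net w b v (x i))
    (hw : ∀ j, w j = ∑ i, (lam i * y i * v j * s i j) • x i)
    (hb : ∀ j, b j = ∑ i, lam i * y i * v j * s i j) :
    ((univ.filter fun i => y i = -1).card : ℝ) ≤ (d + 1) * negativeMass v lam s +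
      (p + 1) * (univ.filter fun i => y i = -1).card * negativeMass v lam s := by
  set Ineg := univ.filter fun i => y i = -1
  have hmass : ∑ n ∈ Ineg, lam n * ∑ j, min (v j) 0 ^ 2 * s n j ≤ negativeMass v lam s :=
    calc ∑ n ∈ Ineg, lam n * ∑ j, min (v j) 0 ^ 2 * s n j
        ≤ ∑ n, lam n * ∑ j, min (v j) 0 ^ 2 * s n j :=
          sum_le_sum_of_subset_of_nonneg (subset_univ _) fun n _ _ =>
            mul_nonneg (hlam n) (sum_nonneg fun j _ => mul_nonneg (sq_nonneg _) (hs n j))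
      _ = negativeMass v lam s := by
          simp only [negativeMass, activationMass, mul_sum]
          rw [sum_comm]
          exact sum_congr rfl fun j _ => sum_congr rfl fun n _ => by ring
  calc (Ineg.card : ℝ) = ∑ _n ∈ Ineg, (1 : ℝ) := by simp
    _ ≤ ∑ n ∈ Ineg, ((d + 1) * (lam n * ∑ j, min (v j) 0 ^ 2 * s n j) +
          (p + 1) * negativeMass v lam s) :=
        sum_le_sum fun n hn => one_le_of_label_eq_neg_one hy hx hp0 hp hlam hs hmargin hw hb n
          (mem_filter.1 hn).2
    _ = (d + 1) * ∑ n ∈ Ineg, lam n * ∑ j, min (v j) 0 ^ 2 * s n j +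
          (p + 1) * Ineg.card * negativeMass v lam s := by
        rw [sum_add_distrib, ← mul_sum, sum_const, nsmul_eq_mul]; ring
    _ ≤ _ := by gcongr

lemma mul_le_negativeMass_mul
    (hy : ∀ i, y i = 1 ∨ y i = -1) (hx : ∀ i, ‖x i‖ = Real.sqrt d)
    (hp0 : 0 ≤ p) (hp : ∀ i j, i ≠ j → |⟪x i, x j⟫_ℝ| ≤ p) (hlam : ∀ i, 0 ≤ lam i)
    (hs : ∀ i j, 0 ≤ s i j) (hmargin : ∀ i, 1 ≤ y i * net w b v (x i))
    (hw : ∀ j, w j = ∑ i, (lam i * y i * v j * s i j) • x i)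
    (hb : ∀ j, b j = ∑ i, lam i * y i * v j * s i j) {c : ℝ} (hc : 0 ≤ c)
    (hcm : c * m ≤ ((univ.filter fun i => y i = -1).card : ℝ)) :
    m * c ≤ negativeMass v lam s * (c * m * (p + 1) + (d + 1)) := by
  have hcard := card_label_neg_one_le hy hx hp0 hp hlam hs hmargin hw hb
  have hΦ := negativeMass_nonneg (v := v) hlam hs
  rcases le_or_gt ((p + 1) * negativeMass v lam s) 1 with h | h
  · nlinarith
  · have hcm0 : 0 ≤ c * m := by positivity
    nlinarith [mul_le_mul_of_nonneg_left h.le hcm0]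

lemma sq_mul_add_le_mul_inner_labelSum
    (hy : ∀ i, y i = 1 ∨ y i = -1) (hx : ∀ i, ‖x i‖ = Real.sqrt d)
    (hp0 : 0 ≤ p) (hp : ∀ i j, i ≠ j → |⟪x i, x j⟫_ℝ| ≤ p) (hlam : ∀ i, 0 ≤ lam i)
    (hs : ∀ i j, 0 ≤ s i j) (hw : ∀ j, w j = ∑ i, (lam i * y i * v j * s i j) • x i)
    {t E : ℝ} (ht0 : 0 ≤ t) (ht : t * ((d : ℝ) - m * p) = p + 1 + E) (j : Fin k) :
    v j ^ 2 * ((p + 1) * activationMass lam s j + E * activationMass lam s j) ≤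
      t * (v j * ⟪w j, labelSum x y⟫_ℝ) := by
  have := mul_le_mul_of_nonneg_left
    (sq_mul_activationMass_mul_le hy hx hp0 hp hlam hs hw j) ht0
  linear_combination this - v j ^ 2 * activationMass lam s j * ht

lemma net_sub_smul_labelSum_le_sub
    (hy : ∀ i, y i = 1 ∨ y i = -1) (hx : ∀ i, ‖x i‖ = Real.sqrt d)
    (hp0 : 0 ≤ p) (hp : ∀ i j, i ≠ j → |⟪x i, x j⟫_ℝ| ≤ p) (hlam : ∀ i, 0 ≤ lam i)
    (hs : ∀ i j, 0 ≤ s i j) (hs0 : ∀ i j, ⟪w j, x i⟫_ℝ + b j < 0 → s i j = 0)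
    (hw : ∀ j, w j = ∑ i, (lam i * y i * v j * s i j) • x i)
    (hb : ∀ j, b j = ∑ i, lam i * y i * v j * s i j)
    {t E : ℝ} (ht0 : 0 ≤ t) (hE : 0 ≤ E) (ht : t * ((d : ℝ) - m * p) = p + 1 + E) (i : Fin m) :
    net w b v (x i - t • labelSum x y) ≤ net w b v (x i) - E * negativeMass v lam s := by
  rw [net_sub_smul, net, negativeMass, mul_sum, ← sum_sub_distrib]
  refine sum_le_sum fun j _ => ?_
  have hA := activationMass_nonneg hlam hs j
  have hg : max 0 (-(⟪w j, x i⟫_ℝ + b j)) ≤ |v j| * ((p + 1) * activationMass lam s j) := by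
    rcases le_or_gt 0 (⟪w j, x i⟫_ℝ + b j) with hg | hg
    · rw [max_eq_left (neg_nonpos.2 hg)]; positivity
    · have hCB := abs_inner_add_sub_le hy hx hp0 hp hlam hs hw hb i j
      rw [hs0 i j hg, mul_zero, zero_mul, mul_zero, sub_zero] at hCB
      exact max_le (by positivity) ((neg_le_abs _).trans hCB)
  rw [mul_left_comm E]
  exact mul_relu_sub_le_mul_relu_sub (by positivity) (by positivity)
    (sq_mul_add_le_mul_inner_labelSum hy hx hp0 hp hlam hs hw ht0 ht j) hg

lemma net_sub_smul_labelSum_le_neg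
    (hy : ∀ i, y i = 1 ∨ y i = -1) (hx : ∀ i, ‖x i‖ = Real.sqrt d)
    (hp0 : 0 ≤ p) (hp : ∀ i j, i ≠ j → |⟪x i, x j⟫_ℝ| ≤ p) (hlam : ∀ i, 0 ≤ lam i)
    (hs : ∀ i j, 0 ≤ s i j) (hw : ∀ j, w j = ∑ i, (lam i * y i * v j * s i j) • x i)
    (hb : ∀ j, b j = ∑ i, lam i * y i * v j * s i j)
    {t E : ℝ} (ht0 : 0 ≤ t) (hE : 0 ≤ E) (ht : t * ((d : ℝ) - m * p) = p + 1 + E) {i : Fin m}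
    (hi : lam i = 0) :
    net w b v (x i - t • labelSum x y) ≤ -(E * negativeMass v lam s) := by
  rw [net_sub_smul, negativeMass, mul_sum, ← sum_neg_distrib]
  refine sum_le_sum fun j _ => ?_
  have hCB := abs_inner_add_sub_le hy hx hp0 hp hlam hs hw hb i j
  rw [hi, zero_mul, zero_mul, zero_mul, mul_zero, sub_zero] at hCB
  rw [mul_left_comm E]
  exact mul_relu_sub_le_neg (mul_nonneg hE (activationMass_nonneg hlam hs j))
    (sq_mul_add_le_mul_inner_labelSum hy hx hp0 hp hlam hs hw ht0 ht j) hCB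

end KKT

theorem kkt_perturbation_flips_positive_general (d m k : ℕ)
    (x : Fin m → EuclideanSpace ℝ (Fin d)) (y : Fin m → ℝ)
    (w : Fin k → EuclideanSpace ℝ (Fin d)) (b v : Fin k → ℝ)
    (lam : Fin m → ℝ) (s : Fin m → Fin k → ℝ) (p : ℝ)
    (hy : ∀ i, y i = 1 ∨ y i = -1)
    (hx : ∀ i, ‖x i‖ = Real.sqrt d)
    (hp0 : 0 ≤ p)
    (hp : ∀ i j, i ≠ j → |⟪x i, x j⟫_ℝ| ≤ p)
    (hlam : ∀ i, 0 ≤ lam i)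
    (hs01 : ∀ i j, s i j ∈ Set.Icc (0 : ℝ) 1)
    (hmargin : ∀ i, 1 ≤ y i * net w b v (x i))
    (hcomp : ∀ i, y i * net w b v (x i) ≠ 1 → lam i = 0)
    (hs0 : ∀ i j, ⟪w j, x i⟫_ℝ + b j < 0 → s i j = 0)
    (hw : ∀ j, w j = ∑ i, (lam i * y i * v j * s i j) • x i)
    (hb : ∀ j, b j = ∑ i, lam i * y i * v j * s i j)
    (hmp : (m : ℝ) * (p + 1) ≤ ((d : ℝ) + 1) / 3)
    (c : ℝ) (hc0 : 0 < c)
    (hcm : c * m ≤ ((Finset.univ.filter fun i => y i = -1).card : ℝ))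
    (η₁ η₂ : ℝ)
    (hη₁ : η₁ = (p + 1) / ((d : ℝ) - (m : ℝ) * p))
    (hη₂ : η₂ = 2 * (c * ((m : ℝ) * (p + 1) / ((d : ℝ) + 1)) + 1) * ((d : ℝ) + 1) /
      ((m : ℝ) * c * ((d : ℝ) - (m : ℝ) * p))) :
    ∀ i, y i = 1 → net w b v (x i - (η₁ + η₂) • ∑ l, y l • x l) ≤ -1 := by
  intro i hyi
  change net w b v (x i - (η₁ + η₂) • labelSum x y) ≤ -1
  have hs : ∀ i j, 0 ≤ s i j := fun i j => (hs01 i j).1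
  have hm : (1 : ℝ) ≤ m := by exact_mod_cast i.pos
  have hD : 0 < (d : ℝ) - m * p := by nlinarith
  have hmc : 0 < (m : ℝ) * c := by positivity
  have hη₂D : η₂ * ((d : ℝ) - m * p) = 2 * (c * m * (p + 1) + (d + 1)) / (m * c) := by
    rw [hη₂]; field_simp
  have hE0 : 0 ≤ η₂ * ((d : ℝ) - m * p) := by rw [hη₂D]; positivity
  have hE : 2 ≤ η₂ * ((d : ℝ) - m * p) * negativeMass v lam s := by
    have := mul_le_negativeMass_mul hy hx hp0 hp hlam hs hmargin hw hb hc0.le hcm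
    rw [hη₂D, div_mul_eq_mul_div, le_div_iff₀ hmc]
    linarith
  have ht : (η₁ + η₂) * ((d : ℝ) - m * p) = p + 1 + η₂ * ((d : ℝ) - m * p) := by
    rw [add_mul, hη₁, div_mul_cancel₀ _ hD.ne']
  have ht0 : 0 ≤ η₁ + η₂ := nonneg_of_mul_nonneg_left (ht ▸ by positivity) hD
  by_cases hmg : y i * net w b v (x i) = 1
  · have := net_sub_smul_labelSum_le_sub hy hx hp0 hp hlam hs hs0 hw hb ht0 hE0 ht i
    rw [hyi, one_mul] at hmg
    linarith
  · have := net_sub_smul_labelSum_le_neg hy hx hp0 hp hlam hs hw hb ht0 hE0 ht (hcomp i hmg)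
    linarith

/-- under the KKT conditions, if `m(p+1) ≤ (d+1)/3`, both labels
occur, and each label makes up a `c`-fraction of the data, then with
`c' := m(p+1)/(d+1)`, `η₁ := (p+1)/(d-mp)`, `η₂ := 2(cc'+1)(d+1)/(mc(d-mp))` and
`z := (η₁+η₂) ∑ₗ yₗ xₗ`, every positively labeled example satisfies
`N_θ(xᵢ - z) ≤ -1`. -/
theorem kkt_perturbation_flips_positive (d m k : ℕ)
    (x : Fin m → EuclideanSpace ℝ (Fin d)) (y : Fin m → ℝ)
    (w : Fin k → EuclideanSpace ℝ (Fin d)) (b v : Fin k → ℝ)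
    (lam : Fin m → ℝ) (s : Fin m → Fin k → ℝ) (p : ℝ)
    (hy : ∀ i, y i = 1 ∨ y i = -1)
    (hx : ∀ i, ‖x i‖ = Real.sqrt d)
    (hp0 : 0 ≤ p)
    (hp : ∀ i j, i ≠ j → |⟪x i, x j⟫_ℝ| ≤ p)
    (hlam : ∀ i, 0 ≤ lam i)
    (hs01 : ∀ i j, s i j ∈ Set.Icc (0 : ℝ) 1)
    (hmargin : ∀ i, 1 ≤ y i * net w b v (x i))
    (hcomp : ∀ i, y i * net w b v (x i) ≠ 1 → lam i = 0)
    (hs1 : ∀ i j, 0 < ⟪w j, x i⟫_ℝ + b j → s i j = 1)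
    (hs0 : ∀ i j, ⟪w j, x i⟫_ℝ + b j < 0 → s i j = 0)
    (hw : ∀ j, w j = ∑ i, (lam i * y i * v j * s i j) • x i)
    (hb : ∀ j, b j = ∑ i, lam i * y i * v j * s i j)
    (hmp : (m : ℝ) * (p + 1) ≤ ((d : ℝ) + 1) / 3)
    (hIp : ∃ i, y i = 1) (hIm : ∃ i, y i = -1)
    (c : ℝ) (hc0 : 0 < c) (hc1 : c ≤ 1)
    (hcp : c * m ≤ ((Finset.univ.filter fun i => y i = 1).card : ℝ))
    (hcm : c * m ≤ ((Finset.univ.filter fun i => y i = -1).card : ℝ))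
    (η₁ η₂ : ℝ)
    (hη₁ : η₁ = (p + 1) / ((d : ℝ) - (m : ℝ) * p))
    (hη₂ : η₂ = 2 * (c * ((m : ℝ) * (p + 1) / ((d : ℝ) + 1)) + 1) * ((d : ℝ) + 1) /
      ((m : ℝ) * c * ((d : ℝ) - (m : ℝ) * p))) :
    ∀ i, y i = 1 → net w b v (x i - (η₁ + η₂) • ∑ l, y l • x l) ≤ -1 :=
  kkt_perturbation_flips_positive_general d m k x y w b v lam s p hy hx hp0 hp hlam hs01 hmargin
    hcomp hs0 hw hb hmp c hc0 hcm η₁ η₂ hη₁ hη₂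
end
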